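/- arXiv:2603.28582 — 7 statements merged into one kernel-verified Lean document; each statement's English description precedes it below -/
import Mathlib

section
/- Let Φ : M_d(ℂ) → M_d(ℂ) be a linear map that is positive, trace-preserving, and unital. Then for every positive semidefinite matrix X, rank Φ(X) ≥ rank X. -/
open ComplexOrder

namespace Stmt3Aux

open Matrix

lemma rank_le_of_ker_le {d : ℕ} {A B : Matrix (Fin d) (Fin d) ℂ}
    (h : LinearMap.ker A.mulVecLin ≤ LinearMap.ker B.mulVecLin) : B.rank ≤ A.rank := by
  have hA := LinearMap.finrank_range_add_finrank_ker A.mulVecLin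
  have hB := LinearMap.finrank_range_add_finrank_ker B.mulVecLin
  have hk := Submodule.finrank_mono h
  simp only [Module.finrank_fintype_fun_eq_card, Fintype.card_fin] at hA hB
  rw [Matrix.rank, Matrix.rank]
  omega

lemma ker_le_of_domination {d : ℕ} {c : ℝ} (hc : 0 < c) {A B : Matrix (Fin d) (Fin d) ℂ}
    (hB : B.PosSemidef) (hAB : (A - (c : ℂ) • B).PosSemidef) :
    LinearMap.ker A.mulVecLin ≤ LinearMap.ker B.mulVecLin := by
  intro x hx
  simp only [LinearMap.mem_ker, mulVecLin_apply] at hx ⊢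
  have hAx : star x ⬝ᵥ A *ᵥ x = 0 := by rw [hx, dotProduct_zero]
  have h1 : (0:ℂ) ≤ star x ⬝ᵥ (A - (c : ℂ) • B) *ᵥ x := hAB.dotProduct_mulVec_nonneg x
  rw [sub_mulVec, dotProduct_sub, hAx, smul_mulVec, dotProduct_smul, zero_sub,
    Left.nonneg_neg_iff] at h1
  have h2 : (0:ℂ) ≤ star x ⬝ᵥ B *ᵥ x := hB.dotProduct_mulVec_nonneg x
  have h3 : (0:ℂ) ≤ (c:ℂ) := by positivity
  have h4 : (c:ℂ) • (star x ⬝ᵥ B *ᵥ x) = 0 := le_antisymm h1 (by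
    rw [smul_eq_mul]; exact mul_nonneg h3 h2)
  have h5 : star x ⬝ᵥ B *ᵥ x = 0 := by
    have hne : (c:ℂ) ≠ 0 := by exact_mod_cast hc.ne'
    simpa [smul_eq_mul, hne] using h4
  exact (hB.dotProduct_mulVec_zero_iff x).mp h5

lemma trace_eq_sum_eigenvalues {d : ℕ} {M : Matrix (Fin d) (Fin d) ℂ} (hM : M.IsHermitian) :
    M.trace = ∑ i, (hM.eigenvalues i : ℂ) := by
  conv_lhs => rw [hM.spectral_theorem]
  rw [Unitary.conjStarAlgAut_apply, Matrix.trace_mul_cycle, Unitary.coe_star_mul_self, one_mul, Matrix.trace_diagonal]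
  simp

lemma eigenvalues_le_one {d : ℕ} {M : Matrix (Fin d) (Fin d) ℂ} (hM : M.IsHermitian)
    (h1M : (1 - M).PosSemidef) (i : Fin d) : hM.eigenvalues i ≤ 1 := by
  have hv := hM.mulVec_eigenvectorBasis i
  set v : Fin d → ℂ := ⇑(hM.eigenvectorBasis i) with hvdef
  have hnorm : star v ⬝ᵥ v = 1 := by
    have h2 := inner_self_eq_norm_sq_to_K (𝕜 := ℂ) (hM.eigenvectorBasis i)
    rw [hM.eigenvectorBasis.orthonormal.1 i] at h2
    rw [EuclideanSpace.inner_eq_star_dotProduct] at h2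
    rw [dotProduct_comm]; simpa using h2
  have h := h1M.dotProduct_mulVec_nonneg v
  rw [sub_mulVec, one_mulVec, hv, dotProduct_sub, hnorm, dotProduct_smul, hnorm] at h
  have h' : (0:ℂ) ≤ ((1 - hM.eigenvalues i : ℝ) : ℂ) := by
    convert h using 1
    push_cast
    simp [Complex.real_smul]
  rw [← Complex.ofReal_zero, Complex.real_le_real] at h'
  linarith

lemma conj_psd {d : ℕ} (V : Matrix.unitaryGroup (Fin d) ℂ) {g : Fin d → ℂ}
    (hg : ∀ i, 0 ≤ g i) :
    ((V : Matrix (Fin d) (Fin d) ℂ) * diagonal g * star (V : Matrix (Fin d) (Fin d) ℂ)).PosSemidef := by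
  rw [Matrix.star_eq_conjTranspose]
  exact (posSemidef_diagonal_iff.mpr hg).mul_mul_conjTranspose_same _

lemma conj_trace {d : ℕ} (V : Matrix.unitaryGroup (Fin d) ℂ) (g : Fin d → ℂ) :
    ((V : Matrix (Fin d) (Fin d) ℂ) * diagonal g * star (V : Matrix (Fin d) (Fin d) ℂ)).trace
      = ∑ i, g i := by
  rw [Matrix.trace_mul_cycle, Unitary.coe_star_mul_self, one_mul, Matrix.trace_diagonal]

lemma conj_sub {d : ℕ} (V : Matrix.unitaryGroup (Fin d) ℂ) (g₁ g₂ : Fin d → ℂ) :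
    (V : Matrix (Fin d) (Fin d) ℂ) * diagonal g₁ * star (V : Matrix (Fin d) (Fin d) ℂ)
      - (V : Matrix (Fin d) (Fin d) ℂ) * diagonal g₂ * star (V : Matrix (Fin d) (Fin d) ℂ)
      = (V : Matrix (Fin d) (Fin d) ℂ) * diagonal (g₁ - g₂) * star (V : Matrix (Fin d) (Fin d) ℂ) := by
  have hd : diagonal (g₁ - g₂) = diagonal g₁ - diagonal g₂ := by
    ext i j
    by_cases h : i = j <;> simp [Matrix.diagonal_apply, h]
  rw [hd, Matrix.mul_sub, Matrix.sub_mul]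

lemma conj_smul {d : ℕ} (V : Matrix.unitaryGroup (Fin d) ℂ) (c : ℂ) (g : Fin d → ℂ) :
    c • ((V : Matrix (Fin d) (Fin d) ℂ) * diagonal g * star (V : Matrix (Fin d) (Fin d) ℂ))
      = (V : Matrix (Fin d) (Fin d) ℂ) * diagonal (c • g) * star (V : Matrix (Fin d) (Fin d) ℂ) := by
  rw [Matrix.diagonal_smul, mul_smul_comm, smul_mul_assoc]

lemma conj_one {d : ℕ} (V : Matrix.unitaryGroup (Fin d) ℂ) :
    (V : Matrix (Fin d) (Fin d) ℂ) * diagonal (fun _ => (1:ℂ)) * star (V : Matrix (Fin d) (Fin d) ℂ)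
      = 1 := by
  rw [Matrix.diagonal_one, mul_one]
  exact Matrix.mem_unitaryGroup_iff.mp V.2

end Stmt3Aux

/-- A positive, trace-preserving, unital linear map on matrices does not
decrease the rank of positive semidefinite matrices. -/
theorem stmt3 (d : ℕ)
    (Φ : Matrix (Fin d) (Fin d) ℂ →ₗ[ℂ] Matrix (Fin d) (Fin d) ℂ)
    (hpos : ∀ X : Matrix (Fin d) (Fin d) ℂ, X.PosSemidef → (Φ X).PosSemidef)
    (htp : ∀ X, (Φ X).trace = X.trace)
    (hunital : Φ 1 = 1) :
    ∀ X : Matrix (Fin d) (Fin d) ℂ, X.PosSemidef → X.rank ≤ (Φ X).rank := by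
  intro X hX
  classical
  open Matrix Stmt3Aux in
  by_cases hz : ∀ i, hX.1.eigenvalues i = 0
  · have h0 : X.rank = 0 := by
      rw [hX.1.rank_eq_card_non_zero_eigs]
      simp [hz]
    rw [h0]; exact Nat.zero_le _
  · set lam := hX.1.eigenvalues with hlam
    set V := hX.1.eigenvectorUnitary with hV
    set S : Finset (Fin d) := Finset.univ.filter (fun i => lam i ≠ 0) with hSdef
    have hS : S.Nonempty := by
      push_neg at hz
      obtain ⟨i, hi⟩ := hz
      exact ⟨i, by simp [hSdef, hi]⟩
    -- rank X = S.card
    have hrankX : X.rank = S.card := by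
      rw [hX.1.rank_eq_card_non_zero_eigs, Fintype.card_subtype]
    -- the threshold c
    set c : ℝ := S.inf' hS lam with hcdef
    have hc : 0 < c := by
      rw [hcdef, Finset.lt_inf'_iff]
      intro i hi
      have hne : lam i ≠ 0 := by simpa [hSdef] using hi
      exact lt_of_le_of_ne (hX.eigenvalues_nonneg i) (Ne.symm hne)
    -- the support projection P
    set f : Fin d → ℂ := fun i => if lam i = 0 then 0 else 1 with hfdef
    set P : Matrix (Fin d) (Fin d) ℂ :=
      (V : Matrix (Fin d) (Fin d) ℂ) * diagonal f * star (V : Matrix (Fin d) (Fin d) ℂ) with hPdef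
    have hfP : ∀ i, (0:ℂ) ≤ f i := by
      intro i; by_cases h : lam i = 0 <;> simp [hfdef, h]
    have hP : P.PosSemidef := conj_psd V hfP
    have h1P : ((1 : Matrix (Fin d) (Fin d) ℂ) - P).PosSemidef := by
      have h1 : (1 : Matrix (Fin d) (Fin d) ℂ) - P
          = (V : Matrix (Fin d) (Fin d) ℂ) * diagonal ((fun _ => (1:ℂ)) - f)
              * star (V : Matrix (Fin d) (Fin d) ℂ) := by
        rw [← conj_sub, conj_one]
      rw [h1]
      refine conj_psd V fun i => ?_
      by_cases h : lam i = 0 <;> simp [hfdef, h]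
    -- X dominates c • P
    have hXspec : X = (V : Matrix (Fin d) (Fin d) ℂ)
        * diagonal (RCLike.ofReal ∘ lam) * star (V : Matrix (Fin d) (Fin d) ℂ) :=
      hX.1.spectral_theorem
    have hXcP : (X - (c:ℂ) • P).PosSemidef := by
      rw [hXspec, hPdef, conj_smul, conj_sub]
      refine conj_psd V fun i => ?_
      simp only [Pi.sub_apply, Pi.smul_apply, Function.comp_apply, smul_eq_mul, hfdef]
      by_cases h : lam i = 0
      · simp [h]
      · have hle : c ≤ lam i := Finset.inf'_le lam (by simp [hSdef, h])
        rw [if_neg h, mul_one]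
        have : (0:ℝ) ≤ lam i - c := by linarith
        have h2 := Complex.real_le_real.mpr this
        simpa [Complex.ofReal_sub] using h2
    -- properties of M = Φ P
    have hM : (Φ P).PosSemidef := hpos P hP
    have h1M : ((1 : Matrix (Fin d) (Fin d) ℂ) - Φ P).PosSemidef := by
      rw [← hunital, ← map_sub]
      exact hpos _ h1P
    have htrP : P.trace = (S.card : ℂ) := by
      rw [hPdef, conj_trace]
      have hfe : ∀ i, f i = if lam i ≠ 0 then (1:ℂ) else 0 := fun i => by
        by_cases h : lam i = 0 <;> simp [hfdef, h]
      simp_rw [hfe]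
      rw [Finset.sum_boole]
    have htrM : (Φ P).trace = (S.card : ℂ) := by rw [htp, htrP]
    -- eigenvalues of Φ P
    set mu := hM.1.eigenvalues with hmu
    have hmusum : ∑ i, mu i = (S.card : ℝ) := by
      have h := trace_eq_sum_eigenvalues hM.1
      rw [htrM] at h
      exact_mod_cast h.symm
    have hmubd : ∀ i, mu i ≤ 1 := fun i => eigenvalues_le_one hM.1 h1M i
    have hmunn : ∀ i, 0 ≤ mu i := fun i => hM.eigenvalues_nonneg i
    set T : Finset (Fin d) := Finset.univ.filter (fun i => mu i ≠ 0) with hTdef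
    have hrankM : (Φ P).rank = T.card := by
      rw [hM.1.rank_eq_card_non_zero_eigs, Fintype.card_subtype]
    have hcardle : S.card ≤ T.card := by
      have h1 : ∑ i ∈ T, mu i = ∑ i, mu i := by
        rw [hTdef]; exact Finset.sum_filter_ne_zero _
      have h2 : ∑ i ∈ T, mu i ≤ T.card • (1:ℝ) :=
        Finset.sum_le_card_nsmul T mu 1 (fun i _ => hmubd i)
      rw [h1, hmusum, nsmul_eq_mul, mul_one] at h2
      exact_mod_cast h2
    -- kernel comparison: rank (Φ P) ≤ rank (Φ X)
    have hdom : ((Φ X) - (c:ℂ) • (Φ P)).PosSemidef := by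
      rw [← _root_.map_smul, ← map_sub]
      exact hpos _ hXcP
    have hfinal : (Φ P).rank ≤ (Φ X).rank :=
      rank_le_of_ker_le (ker_le_of_domination hc hM hdom)
    omega
end

section
/- Let Φ : M_d(ℂ) → M_d(ℂ) be a unital, completely positive, trace-preserving linear map and let P be an orthogonal projection (P = P† = P²). If rank Φ(P) = rank P, then Φ(P) is an orthogonal projection and Φ(P²) = Φ(P)², i.e. P lies in the multiplicative domain of Φ with itself. -/
open ComplexOrder

/-- Complete positivity of a linear map on `d × d` complex matrices:
all block-wise applications to PSD block matrices remain PSD. -/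
def IsCompletelyPositive {d : ℕ}
    (Φ : Matrix (Fin d) (Fin d) ℂ →ₗ[ℂ] Matrix (Fin d) (Fin d) ℂ) : Prop :=
  ∀ (n : ℕ) (M : Matrix (Fin n × Fin d) (Fin n × Fin d) ℂ), M.PosSemidef →
    (Matrix.of fun p q : Fin n × Fin d =>
      Φ (Matrix.of fun a b => M (p.1, a) (q.1, b)) p.2 q.2).PosSemidef


section aux
open Matrix
variable {n : Type*} [Fintype n] [DecidableEq n] {A : Matrix n n ℂ}

lemma aux_trace (hA : A.IsHermitian) : A.trace = ∑ i, (hA.eigenvalues i : ℂ) := by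
  conv_lhs => rw [hA.spectral_theorem]
  simp only [Unitary.conjStarAlgAut_apply, Unitary.coe_star]
  rw [Matrix.trace_mul_cycle,
    (Matrix.mem_unitaryGroup_iff').mp (Matrix.IsHermitian.eigenvectorUnitary hA).2, one_mul,
    Matrix.trace_diagonal]
  rfl

lemma aux_idem (hA : A.IsHermitian) (h : ∀ i, hA.eigenvalues i = 0 ∨ hA.eigenvalues i = 1) :
    A * A = A := by
  conv_lhs => rw [hA.spectral_theorem]
  conv_rhs => rw [hA.spectral_theorem]
  simp only [Unitary.conjStarAlgAut_apply, Unitary.coe_star]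
  have hu := (Matrix.mem_unitaryGroup_iff').mp (Matrix.IsHermitian.eigenvectorUnitary hA).2
  have hD : Matrix.diagonal ((RCLike.ofReal (K := ℂ)) ∘ hA.eigenvalues)
      * Matrix.diagonal ((RCLike.ofReal (K := ℂ)) ∘ hA.eigenvalues)
      = Matrix.diagonal ((RCLike.ofReal (K := ℂ)) ∘ hA.eigenvalues) := by
    rw [Matrix.diagonal_mul_diagonal]
    ext i j
    rcases h i with h' | h' <;>
      simp [Matrix.diagonal_apply, h', Function.comp, apply_ite]
  simp only [Matrix.mul_assoc]
  rw [← Matrix.mul_assoc (star _) _ _, hu, one_mul,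
    ← Matrix.mul_assoc (Matrix.diagonal _) (Matrix.diagonal _) _, hD]

lemma aux_eig_of_idem (hA : A.IsHermitian) (hid : A * A = A) (i : n) :
    hA.eigenvalues i = 0 ∨ hA.eigenvalues i = 1 := by
  have hv := hA.mulVec_eigenvectorBasis i
  have h2 : (A * A) *ᵥ ⇑(hA.eigenvectorBasis i)
      = (hA.eigenvalues i * hA.eigenvalues i) • ⇑(hA.eigenvectorBasis i) := by
    rw [← Matrix.mulVec_mulVec, hv, Matrix.mulVec_smul, hv, smul_smul]
  rw [hid, hv] at h2
  have hne : ⇑(hA.eigenvectorBasis i) ≠ 0 := by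
    have := hA.eigenvectorBasis.orthonormal.ne_zero i
    intro hc
    apply this
    ext j
    exact congrFun hc j
  obtain ⟨j, hj⟩ := Function.ne_iff.mp hne
  simp only [Pi.zero_apply] at hj
  have hc := congrFun h2 j
  simp only [Pi.smul_apply, Complex.real_smul, smul_eq_mul] at hc
  have h5 : ((hA.eigenvalues i : ℂ)) = ((hA.eigenvalues i * hA.eigenvalues i : ℝ) : ℂ) :=
    mul_right_cancel₀ hj hc
  have h3 : hA.eigenvalues i * hA.eigenvalues i = hA.eigenvalues i := by exact_mod_cast h5.symm
  rcases mul_eq_zero.mp (show hA.eigenvalues i * (hA.eigenvalues i - 1) = 0 by ring_nf; linarith) with h | h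
  · exact Or.inl h
  · exact Or.inr (by linarith [sub_eq_zero.mp h])

lemma aux_eig_le_one (hA : A.IsHermitian) (h1 : (1 - A).PosSemidef) (i : n) :
    hA.eigenvalues i ≤ 1 := by
  have hq := h1.dotProduct_mulVec_nonneg ⇑(hA.eigenvectorBasis i)
  have hv := hA.mulVec_eigenvectorBasis i
  have hnorm : dotProduct (star ⇑(hA.eigenvectorBasis i)) ⇑(hA.eigenvectorBasis i)
      = 1 := by
    have := hA.eigenvectorBasis.orthonormal.1 i
    rw [dotProduct_comm, ← EuclideanSpace.inner_eq_star_dotProduct, inner_self_eq_norm_sq_to_K, this]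
    norm_num
  rw [Matrix.sub_mulVec, Matrix.one_mulVec, hv, dotProduct_sub,
    dotProduct_smul, hnorm] at hq
  simp only [Complex.real_smul, mul_one] at hq
  rw [Complex.le_def] at hq
  obtain ⟨hre, -⟩ := hq
  simp only [Complex.zero_re, Complex.sub_re, Complex.one_re, Complex.ofReal_re] at hre
  linarith [hre]


lemma aux_trace_eq_rank (hA : A.IsHermitian)
    (h : ∀ i, hA.eigenvalues i = 0 ∨ hA.eigenvalues i = 1) :
    A.trace = (A.rank : ℂ) := by
  classical
  rw [aux_trace hA, hA.rank_eq_card_non_zero_eigs, Fintype.card_subtype]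
  have h1 : ∀ i ∈ Finset.univ, ((hA.eigenvalues i : ℂ))
      = if hA.eigenvalues i ≠ 0 then (1:ℂ) else 0 := fun i _ => by
    rcases h i with h' | h' <;> simp [h']
  rw [Finset.sum_congr rfl h1, Finset.sum_boole]

lemma aux_key (hA : A.IsHermitian) (h0 : ∀ i, 0 ≤ hA.eigenvalues i)
    (hle : ∀ i, hA.eigenvalues i ≤ 1) (htr : A.trace = (A.rank : ℂ)) (i : n) :
    hA.eigenvalues i = 0 ∨ hA.eigenvalues i = 1 := by
  classical
  rw [aux_trace hA, hA.rank_eq_card_non_zero_eigs, Fintype.card_subtype] at htr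
  have htr' : ∑ j, hA.eigenvalues j
      = ((Finset.univ.filter fun j => hA.eigenvalues j ≠ 0).card : ℝ) := by
    exact_mod_cast htr
  rw [← Finset.sum_boole] at htr'
  have hz : ∑ j, ((if hA.eigenvalues j ≠ 0 then (1:ℝ) else 0) - hA.eigenvalues j) = 0 := by
    rw [Finset.sum_sub_distrib, htr', sub_self]
  have hnn : ∀ j ∈ Finset.univ,
      0 ≤ (if hA.eigenvalues j ≠ 0 then (1:ℝ) else 0) - hA.eigenvalues j := by
    intro j _
    by_cases hj : hA.eigenvalues j = 0 <;> simp [hj]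
    · exact hle j
  have hev := (Finset.sum_eq_zero_iff_of_nonneg hnn).mp hz i (Finset.mem_univ i)
  by_cases hi : hA.eigenvalues i = 0
  · exact Or.inl hi
  · simp only [hi, if_pos, ne_eq, not_false_iff] at hev
    right
    linarith [sub_eq_zero.mp hev]

end aux


lemma aux_pos {d : ℕ} {Φ : Matrix (Fin d) (Fin d) ℂ →ₗ[ℂ] Matrix (Fin d) (Fin d) ℂ}
    (hCP : IsCompletelyPositive Φ) {X : Matrix (Fin d) (Fin d) ℂ}
    (hX : X.PosSemidef) : (Φ X).PosSemidef := by
  have hM : (Matrix.of fun p q : Fin 1 × Fin d => X p.2 q.2).PosSemidef :=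
    hX.submatrix (fun p : Fin 1 × Fin d => p.2)
  have h2 := hCP 1 _ hM
  have h3 := h2.submatrix (fun a : Fin d => ((0 : Fin 1), a))
  exact h3

/-- If a unital CPTP map preserves the rank of an orthogonal projection `P`,
then `Φ P` is an orthogonal projection and `P` lies in the multiplicative
domain of `Φ` with itself: `Φ (P * P) = Φ P * Φ P`. -/
theorem stmt4 (d : ℕ)
    (Φ : Matrix (Fin d) (Fin d) ℂ →ₗ[ℂ] Matrix (Fin d) (Fin d) ℂ)
    (hCP : IsCompletelyPositive Φ)
    (hunital : Φ 1 = 1)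
    (htp : ∀ X, (Φ X).trace = X.trace)
    (P : Matrix (Fin d) (Fin d) ℂ)
    (hPherm : P.IsHermitian) (hPproj : P * P = P)
    (hrank : (Φ P).rank = P.rank) :
    (Φ P).IsHermitian ∧ (Φ P) * (Φ P) = Φ P ∧ Φ (P * P) = Φ P * Φ P := by
  -- P is PSD
  have hPpsd : P.PosSemidef := by
    have h := Matrix.posSemidef_conjTranspose_mul_self P
    rwa [hPherm.eq, hPproj] at h
  -- 1 - P is PSD
  have hQherm : (1 - P).IsHermitian := by
    unfold Matrix.IsHermitian
    rw [Matrix.conjTranspose_sub, Matrix.conjTranspose_one, hPherm.eq]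
  have hQproj : (1 - P) * (1 - P) = 1 - P := by
    rw [sub_mul, one_mul, mul_sub, mul_one, hPproj]
    abel
  have hQpsd : (1 - P).PosSemidef := by
    have h := Matrix.posSemidef_conjTranspose_mul_self (1 - P)
    rwa [hQherm.eq, hQproj] at h
  -- Φ P is PSD and 1 - Φ P is PSD
  have hApsd : (Φ P).PosSemidef := aux_pos hCP hPpsd
  have hAherm : (Φ P).IsHermitian := hApsd.1
  have h1Apsd : (1 - Φ P).PosSemidef := by
    have h := aux_pos hCP hQpsd
    rwa [map_sub, hunital] at h
  -- trace of Φ P equals its rank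
  have htrP : P.trace = (P.rank : ℂ) :=
    aux_trace_eq_rank hPherm (aux_eig_of_idem hPherm hPproj)
  have htrA : (Φ P).trace = ((Φ P).rank : ℂ) := by
    rw [htp P, htrP, hrank]
  -- eigenvalues of Φ P are 0 or 1
  have heig := aux_key hAherm (fun i => hApsd.eigenvalues_nonneg i)
    (fun i => aux_eig_le_one hAherm h1Apsd i) htrA
  have hidem : (Φ P) * (Φ P) = Φ P := aux_idem hAherm heig
  exact ⟨hAherm, hidem, by rw [hPproj, hidem]⟩
end

section
/- Generalized pinching inequality: let (P_l)_{l=1}^L be orthogonal projections on a finite-dimensional Hilbert space with Σ_l P_l = 1, and let α_1, …, α_L be positive reals such that diag(α) ≥ J (in the PSD order, J the all-ones matrix). Then for every positive semidefinite operator X, X ≤ Σ_l α_l P_l X P_l. -/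
open ComplexOrder Matrix

/-- Generalized pinching inequality: if the projections `P l` sum to the
identity and `diag α ≥ J` (all-ones matrix) in the PSD order, then
`X ≤ ∑ l, α l • P l * X * P l` for every PSD `X`. -/
theorem stmt7 (d L : ℕ) (P : Fin L → Matrix (Fin d) (Fin d) ℂ)
    (hherm : ∀ l, (P l).IsHermitian)
    (hproj : ∀ l, P l * P l = P l)
    (horth : ∀ l l', l ≠ l' → P l * P l' = 0)
    (hsum : ∑ l, P l = 1)
    (α : Fin L → ℝ) (hα : ∀ l, 0 < α l)
    (hdom : (Matrix.diagonal α - Matrix.of (fun _ _ : Fin L => (1 : ℝ))).PosSemidef)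
    (X : Matrix (Fin d) (Fin d) ℂ) (hX : X.PosSemidef) :
    ((∑ l, α l • (P l * X * P l)) - X).PosSemidef := by
  obtain ⟨B, hB⟩ : ∃ B : Matrix (Fin L) (Fin L) ℝ, Matrix.diagonal α - Matrix.of (fun _ _ : Fin L => (1 : ℝ)) = Bᴴ * B := by
    open scoped MatrixOrder in exact CStarAlgebra.nonneg_iff_eq_star_mul_self.mp hdom.nonneg
  set Y : Fin L → Matrix (Fin d) (Fin d) ℂ := fun k => ∑ l, ((B k l : ℂ)) • P l with hY
  have key : (∑ l, α l • (P l * X * P l)) - X = ∑ k, (Y k)ᴴ * X * (Y k) := by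
    have hA : ∀ l l', ((∑ k, B k l * B k l' : ℝ) : ℂ)
        = (if l = l' then (α l : ℂ) else 0) - 1 := by
      intro l l'
      have : (Bᴴ * B) l l' = (Matrix.diagonal α - Matrix.of (fun _ _ : Fin L => (1 : ℝ))) l l' := by
        rw [← hB]
      simp only [Matrix.mul_apply, Matrix.conjTranspose_apply, Matrix.sub_apply,
        Matrix.diagonal_apply, Matrix.of_apply, RCLike.star_def, starRingEnd_apply,
        star_trivial] at this
      rw [this]
      split <;> simp
    have hYh : ∀ k, (Y k)ᴴ = Y k := by
      intro k
      simp [hY, Matrix.conjTranspose_sum, Matrix.conjTranspose_smul, (hherm _).eq,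
        Complex.star_def, Complex.conj_ofReal]
    have expand : ∀ k, (Y k)ᴴ * X * (Y k)
        = ∑ l, ∑ l', ((B k l : ℂ) * (B k l' : ℂ)) • (P l * X * P l') := by
      intro k
      rw [hYh k]
      simp only [hY, Finset.sum_mul, Finset.mul_sum, Matrix.smul_mul, Matrix.mul_smul,
        smul_smul]
      rw [Finset.sum_comm]
      exact Finset.sum_congr rfl fun l _ => Finset.sum_congr rfl fun l' _ => by rw [mul_comm]
    rw [Finset.sum_congr rfl fun k _ => expand k]
    rw [Finset.sum_comm]
    have : ∀ l, ∑ k, ∑ l', ((B k l : ℂ) * (B k l' : ℂ)) • (P l * X * P l')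
        = ∑ l', (((if l = l' then (α l : ℂ) else 0) - 1)) • (P l * X * P l') := by
      intro l
      rw [Finset.sum_comm]
      refine Finset.sum_congr rfl fun l' _ => ?_
      rw [← Finset.sum_smul, ← hA l l']
      push_cast
      rfl
    rw [Finset.sum_congr rfl fun l _ => this l]
    simp only [sub_smul, Finset.sum_sub_distrib, one_smul]
    have h1 : ∑ l, ∑ l', (if l = l' then (α l : ℂ) else 0) • (P l * X * P l')
        = ∑ l, α l • (P l * X * P l) := by
      refine Finset.sum_congr rfl fun l _ => ?_
      rw [Finset.sum_eq_single l]
      · ext i j; simp [Matrix.smul_apply, Complex.real_smul, smul_eq_mul]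
      · intro b _ hb; simp [Ne.symm hb]
      · simp
    have h2 : ∑ l, ∑ l', (P l * X * P l') = X := by
      calc ∑ l, ∑ l', (P l * X * P l') = (∑ l, P l) * X * (∑ l', P l') := by
            simp only [Finset.sum_mul, Finset.mul_sum]
            rw [Finset.sum_comm]
        _ = X := by rw [hsum]; simp
    rw [h1, h2]
  rw [key]
  exact Finset.sum_induction _ _ (fun a b ha hb => ha.add hb) Matrix.PosSemidef.zero
    (fun k _ => hX.conjTranspose_mul_mul_same _)
end

section
/- Let |ψ⟩ ∈ A ⊗ B be a unit vector with Schmidt decomposition Σ_i √μ_i |α_i⟩|β_i⟩ (μ_i > 0), reduced state ψ_A on A of full rank on its support, and let ω be a positive definite operator on B. Then the operator norm of (ψ_A^{-1/2} ⊗ ω^{-1/2}) |ψ⟩⟨ψ| (ψ_A^{-1/2} ⊗ ω^{-1/2}) equals Tr(Π ω^{-1}), where Π = Σ_i |β_i⟩⟨β_i| is the projection onto the span of the Schmidt vectors in B and inverses are taken on supports. -/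
open ComplexOrder

open Kronecker

/-- For a unit vector `ψ` with Schmidt decomposition `∑ i, √(μ i) (α i ⊗ β i)`
and a positive definite `ω` on `B` with inverse square root `S`, the operator
norm of `(ψ_A^{-1/2} ⊗ ω^{-1/2}) |ψ⟩⟨ψ| (ψ_A^{-1/2} ⊗ ω^{-1/2})` equals
`Tr (Π ω⁻¹)` where `Π = ∑ i |β i⟩⟨β i|`. -/
theorem stmt8 (dA dB r : ℕ)
    (μ : Fin r → ℝ) (hμpos : ∀ i, 0 < μ i) (hμsum : ∑ i, μ i = 1)
    (a : Fin r → Fin dA → ℂ) (β : Fin r → Fin dB → ℂ)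
    (ha : ∀ i i', ∑ p, (starRingEnd ℂ) (a i p) * a i' p = if i = i' then 1 else 0)
    (hβ : ∀ i i', ∑ b, (starRingEnd ℂ) (β i b) * β i' b = if i = i' then 1 else 0)
    (ω : Matrix (Fin dB) (Fin dB) ℂ) (hω : ω.PosDef)
    (S : Matrix (Fin dB) (Fin dB) ℂ) (hS : S.PosSemidef) (hS2 : S * S = ω⁻¹)
    (ψ : Fin dA × Fin dB → ℂ)
    (hψ : ∀ p, ψ p = ∑ i, (Real.sqrt (μ i) : ℂ) * a i p.1 * β i p.2)
    (ψAinvhalf : Matrix (Fin dA) (Fin dA) ℂ)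
    (hψA : ψAinvhalf =
      ∑ i, (((Real.sqrt (μ i))⁻¹ : ℝ) : ℂ) • Matrix.vecMulVec (a i) (star (a i))) :
    ‖Matrix.toEuclideanCLM (𝕜 := ℂ)
        ((ψAinvhalf ⊗ₖ S) * Matrix.vecMulVec ψ (star ψ) * (ψAinvhalf ⊗ₖ S))‖ =
      (((∑ i, Matrix.vecMulVec (β i) (star (β i))) * ω⁻¹).trace).re := by
  set T : Matrix (Fin dA × Fin dB) (Fin dA × Fin dB) ℂ := ψAinvhalf ⊗ₖ S with hT
  -- Hermitian entries of T
  have hSh : ∀ b c, (starRingEnd ℂ) (S b c) = S c b := by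
    intro b c
    conv_rhs => rw [← hS.1]
    simp [Matrix.conjTranspose_apply]
  have hAh : ∀ p q, (starRingEnd ℂ) (ψAinvhalf p q) = ψAinvhalf q p := by
    intro p q
    rw [hψA]
    simp only [Matrix.sum_apply, Matrix.smul_apply, Matrix.vecMulVec_apply, Pi.star_apply,
      smul_eq_mul, map_sum, map_mul, Complex.conj_ofReal]
    exact Finset.sum_congr rfl fun i _ => by
      simp only [RCLike.star_def, Complex.conj_conj]; ring
  have hTh : ∀ p q, (starRingEnd ℂ) (T p q) = T q p := by
    intro p q
    simp only [hT, Matrix.kroneckerMap_apply, map_mul, hAh, hSh]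
  -- the vector v
  set v : Fin dA × Fin dB → ℂ := fun p => ∑ i, a i p.1 * (S.mulVec (β i)) p.2 with hv
  -- T.mulVec ψ = v
  have hTv : T.mulVec ψ = v := by
    funext p
    rw [Matrix.mulVec, dotProduct]
    rw [Fintype.sum_prod_type]
    simp only [hT, Matrix.kroneckerMap_apply, hψ]
    calc ∑ q1, ∑ q2, ψAinvhalf p.1 q1 * S p.2 q2 *
            ∑ i, (Real.sqrt (μ i) : ℂ) * a i q1 * β i q2
        = ∑ q1, ∑ i, ∑ q2, ψAinvhalf p.1 q1 * S p.2 q2 *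
              ((Real.sqrt (μ i) : ℂ) * a i q1 * β i q2) := by
          refine Finset.sum_congr rfl fun q1 _ => ?_
          simp only [Finset.mul_sum]
          rw [Finset.sum_comm]
      _ = ∑ i, ∑ q1, ∑ q2, ψAinvhalf p.1 q1 * S p.2 q2 *
              ((Real.sqrt (μ i) : ℂ) * a i q1 * β i q2) := Finset.sum_comm
      _ = ∑ i, (Real.sqrt (μ i) : ℂ) * (∑ q1, ψAinvhalf p.1 q1 * a i q1) *
            (∑ q2, S p.2 q2 * β i q2) := by
          refine Finset.sum_congr rfl fun i _ => ?_
          simp only [Finset.mul_sum, Finset.sum_mul]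
          rw [Finset.sum_comm]
          refine Finset.sum_congr rfl fun q2 _ => Finset.sum_congr rfl fun q1 _ => ?_
          ring
      _ = ∑ i, a i p.1 * (S.mulVec (β i)) p.2 := by
          refine Finset.sum_congr rfl fun i _ => ?_
          have h1 : (∑ q1, ψAinvhalf p.1 q1 * a i q1) =
              (((Real.sqrt (μ i))⁻¹ : ℝ) : ℂ) * a i p.1 := by
            rw [hψA]
            simp only [Matrix.sum_apply, Matrix.smul_apply, Matrix.vecMulVec_apply,
              Pi.star_apply, smul_eq_mul, Finset.sum_mul]
            rw [Finset.sum_comm]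
            calc ∑ j, ∑ q1, (((Real.sqrt (μ j))⁻¹ : ℝ) : ℂ) * (a j p.1 * (starRingEnd ℂ) (a j q1)) * a i q1
                = ∑ j, (((Real.sqrt (μ j))⁻¹ : ℝ) : ℂ) * a j p.1 *
                    ∑ q1, (starRingEnd ℂ) (a j q1) * a i q1 := by
                  refine Finset.sum_congr rfl fun j _ => ?_
                  rw [Finset.mul_sum]
                  exact Finset.sum_congr rfl fun q1 _ => by ring
              _ = ∑ j, (((Real.sqrt (μ j))⁻¹ : ℝ) : ℂ) * a j p.1 * if j = i then 1 else 0 := by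
                  simp only [ha]
              _ = (((Real.sqrt (μ i))⁻¹ : ℝ) : ℂ) * a i p.1 := by
                  simp [mul_ite]
          rw [h1, Matrix.mulVec, dotProduct]
          have hne : (Real.sqrt (μ i) : ℂ) ≠ 0 := by
            simp [Real.sqrt_eq_zero', not_le, hμpos i, (hμpos i).le, ne_of_gt]
          push_cast
          field_simp
  have hv' : ∀ p : Fin dA × Fin dB, v p = ∑ i, a i p.1 * (S.mulVec (β i)) p.2 :=
    fun p => rfl
  have hvp : ∀ p, v p = ∑ s, T p s * ψ s := by
    intro p; rw [← hTv]; simp [Matrix.mulVec, dotProduct]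
  have hvq : ∀ q, (starRingEnd ℂ) (v q) = ∑ s, (starRingEnd ℂ) (ψ s) * T s q := by
    intro q
    rw [hvp q, map_sum]
    refine Finset.sum_congr rfl fun s _ => ?_
    rw [map_mul, hTh]; ring
  have hM : T * Matrix.vecMulVec ψ (star ψ) * T = Matrix.vecMulVec v (star v) := by
    ext p q
    simp only [Matrix.mul_apply, Matrix.vecMulVec_apply, Pi.star_apply, RCLike.star_def]
    calc ∑ s, (∑ t, T p t * (ψ t * (starRingEnd ℂ) (ψ s))) * T s q
        = ∑ s, v p * ((starRingEnd ℂ) (ψ s) * T s q) := by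
          refine Finset.sum_congr rfl fun s _ => ?_
          rw [hvp p, Finset.sum_mul, Finset.sum_mul]
          refine Finset.sum_congr rfl fun t _ => ?_
          ring
      _ = v p * (starRingEnd ℂ) (v q) := by rw [← Finset.mul_sum, ← hvq q]
  set ve : EuclideanSpace ℂ (Fin dA × Fin dB) := (WithLp.equiv 2 _).symm v with hve
  have hCLM : Matrix.toEuclideanCLM (𝕜 := ℂ) (Matrix.vecMulVec v (star v)) =
      (innerSL ℂ ve).smulRight ve := by
    refine ContinuousLinearMap.ext fun x => ?_
    refine (WithLp.equiv 2 _).injective ?_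
    funext p
    rw [WithLp.equiv_apply, WithLp.equiv_apply, Matrix.ofLp_toEuclideanCLM]
    simp only [Matrix.toLin'_apply, ContinuousLinearMap.smulRight_apply, innerSL_apply_apply]
    rw [Matrix.mulVec, dotProduct]
    simp only [Matrix.vecMulVec_apply, Pi.star_apply, RCLike.star_def]
    have : (inner ℂ ve x : ℂ) = ∑ q, (starRingEnd ℂ) (v q) * x q := by
      simp [PiLp.inner_apply, RCLike.inner_apply, hve, mul_comm]
    simp only [WithLp.ofLp_smul, Pi.smul_apply, smul_eq_mul, this, Finset.sum_mul]
    refine Finset.sum_congr rfl fun q _ => ?_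
    have hvep : (WithLp.equiv 2 ((Fin dA × Fin dB) → ℂ) ve) p = v p := rfl
    rw [show ve.ofLp p = v p from hvep]
    ring
  have key : ∀ i, (∑ b, (starRingEnd ℂ) ((S.mulVec (β i)) b) * (S.mulVec (β i)) b)
      = ∑ c, ∑ d, (starRingEnd ℂ) (β i c) * (ω⁻¹ c d * β i d) := by
    intro i
    calc ∑ b, (starRingEnd ℂ) ((S.mulVec (β i)) b) * (S.mulVec (β i)) b
        = ∑ b, ∑ c, ∑ d, ((starRingEnd ℂ) (β i c) * β i d) * (S c b * S b d) := by
          refine Finset.sum_congr rfl fun b _ => ?_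
          simp only [Matrix.mulVec, dotProduct]
          rw [map_sum, Finset.sum_mul]
          refine Finset.sum_congr rfl fun c _ => ?_
          rw [Finset.mul_sum]
          refine Finset.sum_congr rfl fun d _ => ?_
          rw [map_mul, hSh]
          ring
      _ = ∑ c, ∑ b, ∑ d, ((starRingEnd ℂ) (β i c) * β i d) * (S c b * S b d) :=
          Finset.sum_comm
      _ = ∑ c, ∑ d, ∑ b, ((starRingEnd ℂ) (β i c) * β i d) * (S c b * S b d) :=
          Finset.sum_congr rfl fun c _ => Finset.sum_comm
      _ = ∑ c, ∑ d, (starRingEnd ℂ) (β i c) * (ω⁻¹ c d * β i d) := by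
          refine Finset.sum_congr rfl fun c _ => Finset.sum_congr rfl fun d _ => ?_
          have hSS : ∑ b, S c b * S b d = ω⁻¹ c d := by
            rw [← hS2, Matrix.mul_apply]
          calc ∑ b, ((starRingEnd ℂ) (β i c) * β i d) * (S c b * S b d)
              = ((starRingEnd ℂ) (β i c) * β i d) * ∑ b, S c b * S b d := by
                rw [Finset.mul_sum]
            _ = (starRingEnd ℂ) (β i c) * (ω⁻¹ c d * β i d) := by rw [hSS]; ring
  have hinner : (∑ p : Fin dA × Fin dB, (starRingEnd ℂ) (v p) * v p)
      = ∑ i, ∑ c, ∑ d, (starRingEnd ℂ) (β i c) * (ω⁻¹ c d * β i d) := by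
    calc ∑ p : Fin dA × Fin dB, (starRingEnd ℂ) (v p) * v p
        = ∑ p : Fin dA × Fin dB, ∑ i, ∑ j,
            ((starRingEnd ℂ) (a i p.1) * (starRingEnd ℂ) ((S.mulVec (β i)) p.2)) *
              (a j p.1 * (S.mulVec (β j)) p.2) := by
          refine Finset.sum_congr rfl fun p _ => ?_
          rw [hv' p, map_sum, Finset.sum_mul]
          refine Finset.sum_congr rfl fun i _ => ?_
          rw [Finset.mul_sum]
          refine Finset.sum_congr rfl fun j _ => ?_
          rw [map_mul]
      _ = ∑ i, ∑ p : Fin dA × Fin dB, ∑ j,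
            ((starRingEnd ℂ) (a i p.1) * (starRingEnd ℂ) ((S.mulVec (β i)) p.2)) *
              (a j p.1 * (S.mulVec (β j)) p.2) := Finset.sum_comm
      _ = ∑ i, ∑ j, ∑ p : Fin dA × Fin dB,
            ((starRingEnd ℂ) (a i p.1) * (starRingEnd ℂ) ((S.mulVec (β i)) p.2)) *
              (a j p.1 * (S.mulVec (β j)) p.2) :=
          Finset.sum_congr rfl fun i _ => Finset.sum_comm
      _ = ∑ i, ∑ j, (∑ p1, (starRingEnd ℂ) (a i p1) * a j p1) *
            (∑ p2, (starRingEnd ℂ) ((S.mulVec (β i)) p2) * (S.mulVec (β j)) p2) := by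
          refine Finset.sum_congr rfl fun i _ => Finset.sum_congr rfl fun j _ => ?_
          rw [Fintype.sum_prod_type, Finset.sum_mul]
          refine Finset.sum_congr rfl fun p1 _ => ?_
          rw [Finset.mul_sum]
          refine Finset.sum_congr rfl fun p2 _ => ?_
          ring
      _ = ∑ i, ∑ p2, (starRingEnd ℂ) ((S.mulVec (β i)) p2) * (S.mulVec (β i)) p2 := by
          refine Finset.sum_congr rfl fun i _ => ?_
          simp only [ha, ite_mul, one_mul, zero_mul]
          simp only [Finset.sum_ite_eq, Finset.mem_univ, if_true]
      _ = ∑ i, ∑ c, ∑ d, (starRingEnd ℂ) (β i c) * (ω⁻¹ c d * β i d) :=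
          Finset.sum_congr rfl fun i _ => key i
  have htrace : ((∑ i, Matrix.vecMulVec (β i) (star (β i))) * ω⁻¹).trace
      = ∑ i, ∑ c, ∑ d, (starRingEnd ℂ) (β i c) * (ω⁻¹ c d * β i d) := by
    rw [Matrix.trace]
    simp only [Matrix.diag_apply, Matrix.mul_apply, Matrix.sum_apply, Matrix.vecMulVec_apply,
      Pi.star_apply, RCLike.star_def, Finset.sum_mul]
    calc ∑ b, ∑ i, ∑ c, β i b * (starRingEnd ℂ) (β i c) * ω⁻¹ c b
        = ∑ i, ∑ b, ∑ c, β i b * (starRingEnd ℂ) (β i c) * ω⁻¹ c b := Finset.sum_comm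
      _ = ∑ i, ∑ c, ∑ b, β i b * (starRingEnd ℂ) (β i c) * ω⁻¹ c b :=
          Finset.sum_congr rfl fun i _ => Finset.sum_comm
      _ = ∑ i, ∑ c, ∑ d, (starRingEnd ℂ) (β i c) * (ω⁻¹ c d * β i d) := by
          refine Finset.sum_congr rfl fun i _ => Finset.sum_congr rfl fun c _ =>
            Finset.sum_congr rfl fun b _ => ?_
          ring
  rw [hM, hCLM, ContinuousLinearMap.norm_smulRight_apply, innerSL_apply_norm]
  rw [← inner_self_eq_norm_mul_norm (𝕜 := ℂ)]
  have hvv : (inner ℂ ve ve : ℂ) = ∑ p : Fin dA × Fin dB, (starRingEnd ℂ) (v p) * v p := by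
    simp only [PiLp.inner_apply, RCLike.inner_apply, hve, mul_comm]
    rfl
  rw [hvv, hinner, htrace]
  rfl
end

section
/- Let A, B be finite-dimensional Hilbert spaces and ω a positive definite state on B. Then the supremum over pure states ψ on A⊗B of −Tr(ψ_{AB} log(ψ_A ⊗ ω)) equals log of the sum of the min(dim A, dim B) largest eigenvalues of ω^{-1}, i.e. sup_ψ D(ψ_{AB} ‖ ψ_A ⊗ ω) = log Tr_{min(d_A,d_B)}(ω^{-1}). -/
open Finset

private lemma gibbs2 {ι : Type*} [Fintype ι] (w c : ι → ℝ)
    (hw : ∀ i, 0 ≤ w i) (hc : ∀ i, 0 ≤ c i) (hw1 : ∑ i, w i = 1)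
    (hwc : ∀ i, c i = 0 → w i = 0) (hT : 0 < ∑ i, c i) :
    ∑ i, w i * (Real.logb 2 (c i) - Real.logb 2 (w i)) ≤ Real.logb 2 (∑ i, c i) := by
  set T := ∑ i, c i with hTdef
  have key : ∀ i, w i * (Real.log (c i) - Real.log (w i)) - w i * Real.log T
      ≤ c i / T - w i := by
    intro i
    rcases eq_or_lt_of_le (hw i) with h0 | h0
    · rw [← h0]
      simp only [zero_mul, sub_zero, zero_sub, neg_nonpos, sub_zero]
      exact div_nonneg (hc i) hT.le
    · have hci : 0 < c i := lt_of_le_of_ne (hc i) fun h => by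
        have := hwc i h.symm; linarith
      have hx : 0 < c i / (w i * T) := by positivity
      have hlog := Real.log_le_sub_one_of_pos hx
      rw [Real.log_div (ne_of_gt hci) (by positivity),
        Real.log_mul (ne_of_gt h0) (ne_of_gt hT)] at hlog
      have h2 := mul_le_mul_of_nonneg_left hlog (le_of_lt h0)
      have e1 : w i * (c i / (w i * T)) = c i / T := by
        field_simp
      nlinarith [h2, e1]
  have hsum := Finset.sum_le_sum (fun i (_ : i ∈ univ) => key i)
  rw [Finset.sum_sub_distrib, Finset.sum_sub_distrib, ← Finset.sum_mul, hw1, one_mul,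
    ← Finset.sum_div, ← hTdef, div_self (ne_of_gt hT)] at hsum
  have hlogmain : ∑ i, w i * (Real.log (c i) - Real.log (w i)) ≤ Real.log T := by linarith
  have hlt2 : (0:ℝ) < Real.log 2 := Real.log_pos (by norm_num)
  have heq : ∑ i, w i * (Real.logb 2 (c i) - Real.logb 2 (w i))
      = (∑ i, w i * (Real.log (c i) - Real.log (w i))) / Real.log 2 := by
    rw [Finset.sum_div]
    refine Finset.sum_congr rfl fun i _ => ?_
    simp only [Real.logb]
    ring
  rw [heq, Real.logb]
  exact div_le_div_of_nonneg_right hlogmain hlt2.le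

private lemma lp_bound {n : ℕ} (s : Finset (Fin n)) (c q : Fin n → ℝ)
    (hc : ∀ j, 0 < c j) (hq0 : ∀ j, 0 ≤ q j) (hq1 : ∀ j, q j ≤ 1)
    (hqsum : ∑ j, q j = (s.card : ℝ))
    (hmax : ∀ t : Finset (Fin n), t.card = s.card → ∑ j ∈ t, c j ≤ ∑ j ∈ s, c j)
    (hne : s.Nonempty) :
    ∑ j, q j * c j ≤ ∑ j ∈ s, c j := by
  obtain ⟨j₀, hj₀, hmin⟩ := s.exists_mem_eq_inf' hne c
  have hcm_le : ∀ j ∈ s, c j₀ ≤ c j := fun j hj => hmin ▸ Finset.inf'_le c hj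
  have hout : ∀ j ∉ s, c j ≤ c j₀ := by
    intro j hj
    by_contra h
    push_neg at h
    have hjne : j ∉ s.erase j₀ := fun hmem => hj (Finset.mem_of_mem_erase hmem)
    have hcard : (insert j (s.erase j₀)).card = s.card := by
      rw [Finset.card_insert_of_notMem hjne, Finset.card_erase_of_mem hj₀]
      have : 1 ≤ s.card := Finset.card_pos.mpr hne
      omega
    have hle := hmax _ hcard
    rw [Finset.sum_insert hjne, Finset.sum_erase_eq_sub hj₀] at hle
    linarith
  have hsplit : ∑ j, q j * c j = ∑ j ∈ s, q j * c j + ∑ j ∈ sᶜ, q j * c j :=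
    (Finset.sum_add_sum_compl s _).symm
  have hA : ∑ j ∈ s, q j + ∑ j ∈ sᶜ, q j = (s.card : ℝ) := by
    rw [Finset.sum_add_sum_compl]; exact hqsum
  have hB : ∑ j ∈ s, (1 - q j) = (s.card : ℝ) - ∑ j ∈ s, q j := by
    rw [Finset.sum_sub_distrib, Finset.sum_const, nsmul_eq_mul, mul_one]
  have h2 : ∑ j ∈ sᶜ, q j * c j ≤ c j₀ * ∑ j ∈ sᶜ, q j := by
    rw [Finset.mul_sum]
    refine Finset.sum_le_sum fun j hj => ?_
    have := hout j (Finset.mem_compl.mp hj)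
    nlinarith [hq0 j]
  have h4 : c j₀ * ∑ j ∈ s, (1 - q j) ≤ ∑ j ∈ s, (1 - q j) * c j := by
    rw [Finset.mul_sum]
    refine Finset.sum_le_sum fun j hj => ?_
    have h1q : 0 ≤ 1 - q j := by linarith [hq1 j]
    nlinarith [hcm_le j hj]
  have h5 : ∑ j ∈ s, q j * c j + ∑ j ∈ s, (1 - q j) * c j = ∑ j ∈ s, c j := by
    rw [← Finset.sum_add_distrib]
    exact Finset.sum_congr rfl fun j _ => by ring
  have hcompl : ∑ j ∈ sᶜ, q j = ∑ j ∈ s, (1 - q j) := by rw [hB]; linarith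
  rw [hsplit]
  rw [hcompl] at h2
  linarith


private lemma inner_eq_sum {n : ℕ} (x y : Fin n → ℂ) :
    (inner ℂ ((WithLp.equiv 2 (Fin n → ℂ)).symm x) ((WithLp.equiv 2 (Fin n → ℂ)).symm y) : ℂ)
      = ∑ b, (starRingEnd ℂ) (x b) * y b := by
  simp [PiLp.inner_apply, RCLike.inner_apply, WithLp.equiv_symm_apply]
  exact Finset.sum_congr rfl fun b _ => mul_comm _ _

private lemma parseval' {n : ℕ} (hn : 0 < n) (v : Fin n → Fin n → ℂ)
    (hv : ∀ j j', ∑ b, (starRingEnd ℂ) (v j b) * v j' b = if j = j' then 1 else 0)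
    (β : Fin n → ℂ) (hβ : ∑ b, (starRingEnd ℂ) (β b) * β b = 1) :
    ∑ j, Complex.normSq (∑ b, (starRingEnd ℂ) (v j b) * β b) = 1 := by
  haveI : Nonempty (Fin n) := ⟨⟨0, hn⟩⟩
  set V : Fin n → EuclideanSpace ℂ (Fin n) := fun j => (WithLp.equiv 2 _).symm (v j) with hV
  have hon : Orthonormal ℂ V := by
    rw [orthonormal_iff_ite]
    intro j j'
    rw [hV]
    simp only
    rw [inner_eq_sum]
    exact hv j j'
  have hcard : Fintype.card (Fin n) = Module.finrank ℂ (EuclideanSpace ℂ (Fin n)) := by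
    simp [finrank_euclideanSpace]
  let B := basisOfLinearIndependentOfCardEqFinrank hon.linearIndependent hcard
  have hB : ⇑B = V := coe_basisOfLinearIndependentOfCardEqFinrank _ _
  let OB := B.toOrthonormalBasis (by rwa [hB])
  have hOB : ⇑OB = V := by
    rw [Module.Basis.coe_toOrthonormalBasis, hB]
  set x : EuclideanSpace ℂ (Fin n) := (WithLp.equiv 2 _).symm β with hx
  have key := OB.sum_inner_mul_inner x x
  rw [hOB] at key
  have hxx : (inner ℂ x x : ℂ) = 1 := by rw [hx, inner_eq_sum]; exact hβ
  rw [hxx] at key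
  have hterm : ∀ j, (inner ℂ x (V j) : ℂ) * inner ℂ (V j) x
      = (Complex.normSq (∑ b, (starRingEnd ℂ) (v j b) * β b) : ℂ) := by
    intro j
    have h1 : (inner ℂ (V j) x : ℂ) = ∑ b, (starRingEnd ℂ) (v j b) * β b := by
      rw [hV, hx]; exact inner_eq_sum _ _
    have h2 : (inner ℂ x (V j) : ℂ) = (starRingEnd ℂ) (inner ℂ (V j) x : ℂ) :=
      (inner_conj_symm _ _).symm
    rw [h2, h1, mul_comm, Complex.mul_conj]
  simp only [hterm] at key
  exact_mod_cast key

private lemma bessel' {m n : ℕ} (β : Fin m → Fin n → ℂ)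
    (hβ : ∀ i i', ∑ b, (starRingEnd ℂ) (β i b) * β i' b = if i = i' then 1 else 0)
    (u : Fin n → ℂ) (hu : ∑ b, (starRingEnd ℂ) (u b) * u b = 1) :
    ∑ i, Complex.normSq (∑ b, (starRingEnd ℂ) (u b) * β i b) ≤ 1 := by
  set Bv : Fin m → EuclideanSpace ℂ (Fin n) := fun i => (WithLp.equiv 2 _).symm (β i) with hBv
  have hon : Orthonormal ℂ Bv := by
    rw [orthonormal_iff_ite]
    intro i i'
    rw [hBv]
    simp only
    rw [inner_eq_sum]
    exact hβ i i'
  set x : EuclideanSpace ℂ (Fin n) := (WithLp.equiv 2 _).symm u with hx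
  have hnorm : ‖x‖ ^ 2 = 1 := by
    have h1 : RCLike.re (inner ℂ x x : ℂ) = ‖x‖ ^ 2 := inner_self_eq_norm_sq x
    rw [hx, inner_eq_sum, hu] at h1
    simpa [hx] using h1.symm
  have hterm : ∀ i, Complex.normSq (∑ b, (starRingEnd ℂ) (u b) * β i b)
      = ‖(inner ℂ (Bv i) x : ℂ)‖ ^ 2 := by
    intro i
    have h1 : (inner ℂ x (Bv i) : ℂ) = ∑ b, (starRingEnd ℂ) (u b) * β i b := by
      rw [hx, hBv]; exact inner_eq_sum _ _
    rw [← h1, ← norm_inner_symm, Complex.normSq_eq_norm_sq]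
  calc ∑ i, Complex.normSq (∑ b, (starRingEnd ℂ) (u b) * β i b)
      = ∑ i, ‖(inner ℂ (Bv i) x : ℂ)‖ ^ 2 := Finset.sum_congr rfl fun i _ => hterm i
    _ ≤ ‖x‖ ^ 2 := hon.sum_inner_products_le x
    _ = 1 := hnorm

/-- The supremum over pure states `ψ` on `A ⊗ B` (parametrized by Schmidt
decompositions, with `ω = ∑ j, e j • |v j⟩⟨v j|` a positive definite state on
`B`) of the Umegaki relative entropy
`D(ψ_{AB} ‖ ψ_A ⊗ ω) = H(μ) − ∑ i, μ i ⟨β i| log₂ ω |β i⟩` equals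
`log₂` of the sum of the `min (dim A) (dim B)` largest eigenvalues of `ω⁻¹`. -/
theorem stmt10 (dA dB : ℕ) (hA : 0 < dA) (hB : 0 < dB)
    (ω : Matrix (Fin dB) (Fin dB) ℂ)
    (e : Fin dB → ℝ) (he : ∀ j, 0 < e j) (hesum : ∑ j, e j = 1)
    (v : Fin dB → Fin dB → ℂ)
    (hv : ∀ j j', ∑ b, (starRingEnd ℂ) (v j b) * v j' b = if j = j' then 1 else 0)
    (hω : ω = ∑ j, ((e j : ℝ) : ℂ) • Matrix.vecMulVec (v j) (star (v j))) :
    IsGreatest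
      {x : ℝ | ∃ (μ : Fin (min dA dB) → ℝ) (a : Fin (min dA dB) → Fin dA → ℂ)
        (β : Fin (min dA dB) → Fin dB → ℂ),
        (∀ i, 0 ≤ μ i) ∧ ∑ i, μ i = 1 ∧
        (∀ i i', ∑ p, (starRingEnd ℂ) (a i p) * a i' p = if i = i' then 1 else 0) ∧
        (∀ i i', ∑ b, (starRingEnd ℂ) (β i b) * β i' b = if i = i' then 1 else 0) ∧
        x = (-∑ i, μ i * Real.logb 2 (μ i)) -
            ∑ i, μ i * ∑ j, Real.logb 2 (e j) *
              Complex.normSq (∑ b, (starRingEnd ℂ) (v j b) * β i b)}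
      (Real.logb 2 (sSup {y : ℝ | ∃ s : Finset (Fin dB), s.card = min dA dB ∧
        y = ∑ j ∈ s, (e j)⁻¹})) := by
  classical
  set m := min dA dB with hmdef
  have hm0 : 0 < m := lt_min hA hB
  have hmA : m ≤ dA := min_le_left _ _
  have hmB : m ≤ dB := min_le_right _ _
  -- the maximizing subset
  obtain ⟨s₀, _, hs₀⟩ := Finset.exists_subset_card_eq
    (show m ≤ (Finset.univ : Finset (Fin dB)).card by simpa using hmB)
  have hFne : ((Finset.univ : Finset (Finset (Fin dB))).filter fun s => s.card = m).Nonempty :=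
    ⟨s₀, by simp [hs₀]⟩
  obtain ⟨s₁, hs₁mem, hs₁max⟩ := Finset.exists_max_image _ (fun s => ∑ j ∈ s, (e j)⁻¹) hFne
  have hs₁card : s₁.card = m := (Finset.mem_filter.mp hs₁mem).2
  have hmax : ∀ s : Finset (Fin dB), s.card = m → ∑ j ∈ s, (e j)⁻¹ ≤ ∑ j ∈ s₁, (e j)⁻¹ :=
    fun s hs => hs₁max s (by simp [hs])
  set T := ∑ j ∈ s₁, (e j)⁻¹ with hTdef
  have hs₁ne : s₁.Nonempty := Finset.card_pos.mp (by rw [hs₁card]; exact hm0)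
  have hTpos : 0 < T := Finset.sum_pos (fun j _ => inv_pos.mpr (he j)) hs₁ne
  have hsup : sSup {y : ℝ | ∃ s : Finset (Fin dB), s.card = m ∧ y = ∑ j ∈ s, (e j)⁻¹} = T := by
    apply IsGreatest.csSup_eq
    exact ⟨⟨s₁, hs₁card, hTdef⟩, by rintro y ⟨s, hsc, rfl⟩; exact hmax s hsc⟩
  rw [hsup]
  constructor
  · -- membership : achievability
    set σ : Fin m ↪o Fin dB := s₁.orderEmbOfFin hs₁card with hσ
    have hσmem : ∀ i, σ i ∈ s₁ := fun i => Finset.orderEmbOfFin_mem _ _ _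
    have himg : Finset.univ.map σ.toEmbedding = s₁ := by
      apply Finset.eq_of_subset_of_card_le
      · intro j hj
        simp only [Finset.mem_map, Finset.mem_univ, true_and] at hj
        obtain ⟨i, rfl⟩ := hj
        exact hσmem i
      · rw [Finset.card_map, Finset.card_univ, Fintype.card_fin, hs₁card]
    have hσsum : ∀ f : Fin dB → ℝ, ∑ i, f (σ i) = ∑ j ∈ s₁, f j := by
      intro f; rw [← himg, Finset.sum_map]; rfl
    have hsum1 : ∑ i : Fin m, (e (σ i))⁻¹ / T = 1 := by
      rw [← Finset.sum_div, hσsum fun j => (e j)⁻¹, ← hTdef, div_self hTpos.ne']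
    refine ⟨fun i => (e (σ i))⁻¹ / T, fun i q => if q = Fin.castLE hmA i then 1 else 0,
      fun i => v (σ i), fun i => div_nonneg (inv_pos.mpr (he _)).le hTpos.le, hsum1, ?_, ?_, ?_⟩
    · intro i i'
      simp only [apply_ite (starRingEnd ℂ), map_one, map_zero, ite_mul, one_mul, zero_mul]
      simp [Finset.sum_ite_eq', Fin.castLE_inj]
    · intro i i'
      rw [hv]
      simp [σ.injective.eq_iff]
    · -- the value equals logb 2 T
      have hinner : ∀ i : Fin m, (∑ j, Real.logb 2 (e j) *
          Complex.normSq (∑ b, (starRingEnd ℂ) (v j b) * v (σ i) b)) = Real.logb 2 (e (σ i)) := by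
        intro i
        have hns : ∀ j, Complex.normSq (∑ b, (starRingEnd ℂ) (v j b) * v (σ i) b)
            = if j = σ i then 1 else 0 := by
          intro j; rw [hv j (σ i)]; split_ifs <;> simp
        simp [hns, mul_ite, Finset.sum_ite_eq']
      simp only [hinner]
      have hmu : ∀ i : Fin m, (e (σ i))⁻¹ / T * Real.logb 2 ((e (σ i))⁻¹ / T)
          + (e (σ i))⁻¹ / T * Real.logb 2 (e (σ i)) = (e (σ i))⁻¹ / T * (-Real.logb 2 T) := by
        intro i
        have hμpos : 0 < (e (σ i))⁻¹ / T := div_pos (inv_pos.mpr (he _)) hTpos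
        rw [← mul_add, ← Real.logb_mul hμpos.ne' (he (σ i)).ne']
        congr 1
        rw [show (e (σ i))⁻¹ / T * e (σ i) = T⁻¹ by
          rw [div_mul_eq_mul_div, inv_mul_cancel₀ (he (σ i)).ne', one_div], Real.logb_inv]
      have hkey := Finset.sum_congr rfl fun (i : Fin m) (_ : i ∈ Finset.univ) => hmu i
      rw [Finset.sum_add_distrib, ← Finset.sum_mul, hsum1, one_mul] at hkey
      linarith
  · -- upper bound
    rintro x ⟨μ, a, β, hμ0, hμsum, ha, hβ, rfl⟩
    set p : Fin m → Fin dB → ℝ :=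
      fun i j => Complex.normSq (∑ b, (starRingEnd ℂ) (v j b) * β i b) with hp
    have hpd : ∀ i j, Complex.normSq (∑ b, (starRingEnd ℂ) (v j b) * β i b) = p i j :=
      fun i j => rfl
    have hp0 : ∀ i j, 0 ≤ p i j := fun i j => Complex.normSq_nonneg _
    have hp1 : ∀ i, ∑ j, p i j = 1 := fun i => parseval' hB v hv (β i) (by simpa using hβ i i)
    have hpq : ∀ j, ∑ i, p i j ≤ 1 := fun j => bessel' β hβ (v j) (by simpa using hv j j)
    have hw0 : ∀ ij : Fin m × Fin dB, 0 ≤ μ ij.1 * p ij.1 ij.2 :=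
      fun ij => mul_nonneg (hμ0 _) (hp0 _ _)
    have hc0 : ∀ ij : Fin m × Fin dB, 0 ≤ p ij.1 ij.2 * (e ij.2)⁻¹ :=
      fun ij => mul_nonneg (hp0 _ _) (inv_pos.mpr (he _)).le
    have hwsum : ∑ ij : Fin m × Fin dB, μ ij.1 * p ij.1 ij.2 = 1 := by
      rw [Fintype.sum_prod_type]
      calc ∑ i, ∑ j, μ i * p i j = ∑ i, μ i * ∑ j, p i j :=
            Finset.sum_congr rfl fun i _ => (Finset.mul_sum _ _ _).symm
        _ = 1 := by simp only [hp1, mul_one]; exact hμsum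
    have hwc : ∀ ij : Fin m × Fin dB, p ij.1 ij.2 * (e ij.2)⁻¹ = 0 → μ ij.1 * p ij.1 ij.2 = 0 := by
      intro ij hcij
      have hz : p ij.1 ij.2 = 0 := by
        rcases mul_eq_zero.mp hcij with h | h
        · exact h
        · exact absurd h (inv_ne_zero (he _).ne')
      rw [hz, mul_zero]
    have hSeq : ∑ ij : Fin m × Fin dB, p ij.1 ij.2 * (e ij.2)⁻¹
        = ∑ j, (∑ i, p i j) * (e j)⁻¹ := by
      rw [Fintype.sum_prod_type_right]
      refine Finset.sum_congr rfl fun j _ => ?_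
      simp only
      exact (Finset.sum_mul _ _ _).symm
    have hSpos : 0 < ∑ ij : Fin m × Fin dB, p ij.1 ij.2 * (e ij.2)⁻¹ := by
      have i₀ : Fin m := ⟨0, hm0⟩
      obtain ⟨j₀, hj₀⟩ : ∃ j, 0 < p i₀ j := by
        by_contra h
        push_neg at h
        have h1 : ∑ j, p i₀ j ≤ 0 := Finset.sum_nonpos fun j _ => h j
        rw [hp1 i₀] at h1
        linarith
      rw [Fintype.sum_prod_type]
      refine Finset.sum_pos' (fun i _ => Finset.sum_nonneg fun j _ => hc0 (i, j))
        ⟨i₀, Finset.mem_univ _, ?_⟩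
      refine Finset.sum_pos' (fun j _ => hc0 (i₀, j)) ⟨j₀, Finset.mem_univ _, ?_⟩
      exact mul_pos hj₀ (inv_pos.mpr (he _))
    have hST : ∑ ij : Fin m × Fin dB, p ij.1 ij.2 * (e ij.2)⁻¹ ≤ T := by
      rw [hSeq, hTdef]
      refine lp_bound s₁ (fun j => (e j)⁻¹) (fun j => ∑ i, p i j)
        (fun j => inv_pos.mpr (he j)) (fun j => Finset.sum_nonneg fun i _ => hp0 i j)
        hpq ?_ (fun t ht => hmax t (ht.trans hs₁card)) hs₁ne
      rw [Finset.sum_comm]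
      simp only [hp1]
      simp [hs₁card]
    have key : ∀ (i : Fin m) (j : Fin dB),
        p i j * (μ i * (-Real.logb 2 (μ i))) - μ i * (Real.logb 2 (e j) * p i j)
        = (μ i * p i j) * (Real.logb 2 (p i j * (e j)⁻¹) - Real.logb 2 (μ i * p i j)) := by
      intro i j
      rcases eq_or_lt_of_le (hμ0 i) with h1 | h1
      · rw [← h1]; ring
      rcases eq_or_lt_of_le (hp0 i j) with h2 | h2
      · rw [← h2]; ring
      rw [Real.logb_mul h2.ne' (inv_ne_zero (he j).ne'), Real.logb_inv,
        Real.logb_mul h1.ne' h2.ne']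
      ring
    have hx : (-∑ i, μ i * Real.logb 2 (μ i)) - ∑ i, μ i * ∑ j, Real.logb 2 (e j) * p i j
        = ∑ ij : Fin m × Fin dB, (μ ij.1 * p ij.1 ij.2) *
            (Real.logb 2 (p ij.1 ij.2 * (e ij.2)⁻¹) - Real.logb 2 (μ ij.1 * p ij.1 ij.2)) := by
      rw [Fintype.sum_prod_type]
      rw [show (-∑ i, μ i * Real.logb 2 (μ i)) - ∑ i, μ i * ∑ j, Real.logb 2 (e j) * p i j
          = ∑ i, (-(μ i * Real.logb 2 (μ i)) - μ i * ∑ j, Real.logb 2 (e j) * p i j) from by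
        rw [Finset.sum_sub_distrib, Finset.sum_neg_distrib]]
      refine Finset.sum_congr rfl fun i _ => ?_
      have hsplit : -(μ i * Real.logb 2 (μ i)) = ∑ j, p i j * (μ i * (-Real.logb 2 (μ i))) := by
        rw [← Finset.sum_mul, hp1 i, one_mul]; ring
      rw [hsplit, Finset.mul_sum, ← Finset.sum_sub_distrib]
      exact Finset.sum_congr rfl fun j _ => key i j
    simp only [hpd]
    rw [hx]
    calc ∑ ij : Fin m × Fin dB, (μ ij.1 * p ij.1 ij.2) *
            (Real.logb 2 (p ij.1 ij.2 * (e ij.2)⁻¹) - Real.logb 2 (μ ij.1 * p ij.1 ij.2))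
        ≤ Real.logb 2 (∑ ij : Fin m × Fin dB, p ij.1 ij.2 * (e ij.2)⁻¹) :=
          gibbs2 _ _ hw0 hc0 hwsum hwc hSpos
      _ ≤ Real.logb 2 T :=
          (Real.logb_le_logb (by norm_num) hSpos hTpos).mpr hST
end

section
/- Let A, B be finite-dimensional Hilbert spaces and ω a positive definite state on B. Then the supremum over pure states ψ on A⊗B of −log Tr(ψ_{AB} (ψ_A ⊗ ω)) equals log of the sum of the min(dim A, dim B) largest eigenvalues of ω^{-1}. -/
open ComplexOrder

open Kronecker

open Matrix

open scoped MatrixOrder in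
lemma cs_vec {n : ℕ} {Ω : Matrix (Fin n) (Fin n) ℂ} (hΩ : Ω.PosDef) (u : Fin n → ℂ)
    (hu : star u ⬝ᵥ u = 1) :
    1 ≤ (star u ⬝ᵥ Ω *ᵥ u).re * (star u ⬝ᵥ Ω⁻¹ *ᵥ u).re := by
  set R := CFC.sqrt Ω with hRdef
  have hR : R.PosSemidef := (CFC.sqrt_nonneg Ω).posSemidef
  have hRR : R * R = Ω := CFC.sqrt_mul_sqrt_self Ω hΩ.posSemidef.nonneg
  have hdet : IsUnit R.det := by
    have hΩdet : IsUnit Ω.det := isUnit_iff_ne_zero.2 (ne_of_gt hΩ.det_pos)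
    rw [← hRR, det_mul] at hΩdet
    exact (isUnit_mul_self_iff.mp hΩdet)
  have hRinv : R * R⁻¹ = 1 := mul_nonsing_inv R hdet
  have hRH : Rᴴ = R := hR.1
  have hRinvH : (R⁻¹)ᴴ = R⁻¹ := by rw [conjTranspose_nonsing_inv, hRH]
  set x : EuclideanSpace ℂ (Fin n) := WithLp.toLp 2 (R *ᵥ u) with hx
  set y : EuclideanSpace ℂ (Fin n) := WithLp.toLp 2 (R⁻¹ *ᵥ u) with hy
  have hinner : inner ℂ x y = (1 : ℂ) := by
    rw [EuclideanSpace.inner_eq_star_dotProduct, dotProduct_comm]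
    show star (R *ᵥ u) ⬝ᵥ (R⁻¹ *ᵥ u) = 1
    rw [star_mulVec, hRH, dotProduct_mulVec, vecMul_vecMul, ← dotProduct_mulVec, hRinv,
      one_mulVec, hu]
  have hxx : (inner ℂ x x : ℂ) = star u ⬝ᵥ Ω *ᵥ u := by
    rw [EuclideanSpace.inner_eq_star_dotProduct, dotProduct_comm]
    show star (R *ᵥ u) ⬝ᵥ (R *ᵥ u) = _
    rw [star_mulVec, hRH, dotProduct_mulVec, vecMul_vecMul, ← dotProduct_mulVec, hRR]
  have hyy : (inner ℂ y y : ℂ) = star u ⬝ᵥ Ω⁻¹ *ᵥ u := by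
    rw [EuclideanSpace.inner_eq_star_dotProduct, dotProduct_comm]
    show star (R⁻¹ *ᵥ u) ⬝ᵥ (R⁻¹ *ᵥ u) = _
    rw [star_mulVec, hRinvH, dotProduct_mulVec, vecMul_vecMul, ← dotProduct_mulVec,
      ← Matrix.mul_inv_rev, hRR]
  have h1 : (1 : ℝ) ≤ ‖x‖ * ‖y‖ := by
    have := norm_inner_le_norm (𝕜 := ℂ) x y
    rwa [hinner, norm_one] at this
  have hx2 : ‖x‖ ^ 2 = (star u ⬝ᵥ Ω *ᵥ u).re := by
    rw [← hxx]; exact (inner_self_eq_norm_sq (𝕜 := ℂ) x).symm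
  have hy2 : ‖y‖ ^ 2 = (star u ⬝ᵥ Ω⁻¹ *ᵥ u).re := by
    rw [← hyy]; exact (inner_self_eq_norm_sq (𝕜 := ℂ) y).symm
  calc (1:ℝ) = 1 * 1 := by ring
  _ ≤ (‖x‖ * ‖y‖) * (‖x‖ * ‖y‖) := by nlinarith [norm_nonneg x, norm_nonneg y]
  _ = ‖x‖^2 * ‖y‖^2 := by ring
  _ = _ := by rw [hx2, hy2]

lemma exists_max_finset {n k : ℕ} (hk : k ≤ n) (f : Fin n → ℝ) :
    ∃ s₀ : Finset (Fin n), s₀.card = k ∧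
      (∀ s : Finset (Fin n), s.card = k → ∑ j ∈ s, f j ≤ ∑ j ∈ s₀, f j) ∧
      ∑ j ∈ s₀, f j = sSup {y : ℝ | ∃ s : Finset (Fin n), s.card = k ∧ y = ∑ j ∈ s, f j} := by
  set Y := {y : ℝ | ∃ s : Finset (Fin n), s.card = k ∧ y = ∑ j ∈ s, f j} with hY
  have hYeq : Y = (fun s : Finset (Fin n) => ∑ j ∈ s, f j) '' {s | s.card = k} := by
    ext y; simp [hY, eq_comm]
  have hfin : Y.Finite := by
    rw [hYeq]; exact (Set.toFinite _).image _
  have hne : Y.Nonempty := by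
    obtain ⟨t, -, ht⟩ := Finset.exists_subset_card_eq (s := (Finset.univ : Finset (Fin n)))
      (by simpa using hk)
    exact ⟨∑ j ∈ t, f j, t, ht, rfl⟩
  obtain ⟨s₀, hcard, hsum⟩ := hne.csSup_mem hfin
  refine ⟨s₀, hcard, fun s hs => ?_, hsum.symm⟩
  rw [← hsum]
  exact le_csSup hfin.bddAbove ⟨s, hs, rfl⟩

lemma max_finset_swap {n k : ℕ} {f : Fin n → ℝ} {s₀ : Finset (Fin n)} (hcard : s₀.card = k)
    (hmax : ∀ s : Finset (Fin n), s.card = k → ∑ j ∈ s, f j ≤ ∑ j ∈ s₀, f j) :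
    ∀ i ∈ s₀, ∀ j ∉ s₀, f j ≤ f i := by
  intro i hi j hj
  by_contra hlt
  push_neg at hlt
  have hjne : j ∉ s₀.erase i := fun h => hj (Finset.mem_of_mem_erase h)
  have hcard' : (insert j (s₀.erase i)).card = k := by
    rw [Finset.card_insert_of_notMem hjne, Finset.card_erase_of_mem hi, hcard]
    have h1 : 1 ≤ s₀.card := Finset.card_pos.2 ⟨i, hi⟩
    omega
  have hsum' := hmax _ hcard'
  rw [Finset.sum_insert hjne] at hsum'
  have hsplit : f i + ∑ j ∈ s₀.erase i, f j = ∑ j ∈ s₀, f j := Finset.add_sum_erase s₀ f hi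
  linarith

lemma kyfan_scalar {n k : ℕ} {f : Fin n → ℝ} {s₀ : Finset (Fin n)} (hne : s₀.Nonempty)
    (hcard : s₀.card = k) (hpos : ∀ j, 0 < f j)
    (hswap : ∀ i ∈ s₀, ∀ j ∉ s₀, f j ≤ f i)
    (t : Fin n → ℝ) (ht0 : ∀ j, 0 ≤ t j) (ht1 : ∀ j, t j ≤ 1)
    (hts : ∑ j, t j ≤ (k : ℝ)) :
    ∑ j, f j * t j ≤ ∑ j ∈ s₀, f j := by
  set m := s₀.inf' hne f with hm
  have hm_le : ∀ i ∈ s₀, m ≤ f i := fun i hi => Finset.inf'_le f hi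
  have hm_pos : 0 < m := by
    obtain ⟨i, hi, hie⟩ := Finset.exists_mem_eq_inf' hne f
    rw [hm, hie]; exact hpos i
  have h_le_m : ∀ j ∉ s₀, f j ≤ m := fun j hj =>
    Finset.le_inf' hne f (fun i hi => hswap i hi j hj)
  have hsplit : ∑ j, f j * t j = ∑ j ∈ s₀, f j * t j + ∑ j ∈ s₀ᶜ, f j * t j :=
    (Finset.sum_add_sum_compl s₀ _).symm
  have h1 : ∑ j ∈ s₀ᶜ, f j * t j ≤ m * ∑ j ∈ s₀ᶜ, t j := by
    rw [Finset.mul_sum]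
    exact Finset.sum_le_sum fun j hj =>
      mul_le_mul_of_nonneg_right (h_le_m j (by simpa using hj)) (ht0 j)
  have h2 : ∑ j ∈ s₀ᶜ, t j ≤ (k : ℝ) - ∑ j ∈ s₀, t j := by
    have := Finset.sum_add_sum_compl s₀ t
    linarith [hts]
  have h3 : m * ((k : ℝ) - ∑ j ∈ s₀, t j) = ∑ j ∈ s₀, m * (1 - t j) := by
    have : ∑ j ∈ s₀, m * (1 - t j) = (s₀.card : ℝ) * m - m * ∑ j ∈ s₀, t j := by
      simp [mul_sub, Finset.sum_sub_distrib, Finset.mul_sum]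
    rw [this, hcard]; ring
  have h4 : ∑ j ∈ s₀, (f j * t j + m * (1 - t j)) ≤ ∑ j ∈ s₀, f j := by
    refine Finset.sum_le_sum fun j hj => ?_
    have := hm_le j hj
    have := ht1 j
    have := ht0 j
    nlinarith
  calc ∑ j, f j * t j = ∑ j ∈ s₀, f j * t j + ∑ j ∈ s₀ᶜ, f j * t j := hsplit
  _ ≤ ∑ j ∈ s₀, f j * t j + m * ((k:ℝ) - ∑ j ∈ s₀, t j) := by
      have := mul_le_mul_of_nonneg_left h2 hm_pos.le
      linarith [h1]
  _ = ∑ j ∈ s₀, (f j * t j + m * (1 - t j)) := by rw [Finset.sum_add_distrib, h3]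
  _ ≤ ∑ j ∈ s₀, f j := h4

-- quadratic form entry helper
lemma sandwich_diag {n : ℕ} (V A : Matrix (Fin n) (Fin n) ℂ) (i : Fin n) :
    (star V * A * V) i i = star (fun a => V a i) ⬝ᵥ A *ᵥ (fun a => V a i) := by
  simp only [Matrix.mul_apply, Matrix.star_apply, dotProduct, Matrix.mulVec, dotProduct,
    Finset.sum_mul, Finset.mul_sum, Pi.star_apply]
  rw [Finset.sum_comm]
  refine Finset.sum_congr rfl fun a _ => Finset.sum_congr rfl fun b _ => by ring

lemma diag_quadform {n : ℕ} (g : Fin n → ℝ) (w : Fin n → ℂ) :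
    (star w ⬝ᵥ (Matrix.diagonal (fun j => (g j : ℂ))) *ᵥ w).re
      = ∑ j, g j * Complex.normSq (w j) := by
  simp only [dotProduct, Matrix.mulVec_diagonal, Pi.star_apply]
  rw [Complex.re_sum]
  refine Finset.sum_congr rfl fun j _ => ?_
  have : star (w j) * ((g j : ℂ) * w j) = (g j : ℂ) * (Complex.normSq (w j) : ℂ) := by
    rw [show star (w j) * ((g j : ℂ) * w j) = (g j : ℂ) * (star (w j) * w j) by ring]
    congr 1
    rw [show star (w j) = (starRingEnd ℂ) (w j) from rfl, mul_comm, Complex.mul_conj]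
  rw [this]
  simp [Complex.ofReal_mul]

lemma col_dot {n : ℕ} (A B : Matrix (Fin n) (Fin n) ℂ) (i : Fin n) :
    (star A * B) i i = star (fun a => A a i) ⬝ᵥ (fun a => B a i) := by
  simp [Matrix.mul_apply, dotProduct, Matrix.star_apply]

lemma trace_lower_bound {dB : ℕ} {ω : Matrix (Fin dB) (Fin dB) ℂ} (hω : ω.PosDef)
    {r : ℕ} {s₀ : Finset (Fin dB)} (hne : s₀.Nonempty) (hcard : s₀.card = r)
    (hswap : ∀ i ∈ s₀, ∀ j ∉ s₀, hω.inv.1.eigenvalues j ≤ hω.inv.1.eigenvalues i)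
    {N : Matrix (Fin dB) (Fin dB) ℂ} (hN : N.PosSemidef) (htrN : N.trace = 1)
    (hrank : N.rank ≤ r) :
    1 / (∑ j ∈ s₀, hω.inv.1.eigenvalues j) ≤ (N * N * ω).trace.re := by
  classical
  set lv : Fin dB → ℝ := hω.inv.1.eigenvalues with hlv
  set S : ℝ := ∑ j ∈ s₀, lv j with hS
  have hH : N.IsHermitian := hN.1
  set μ : Fin dB → ℝ := hH.eigenvalues with hμ
  set V : Matrix (Fin dB) (Fin dB) ℂ := (hH.eigenvectorUnitary : Matrix (Fin dB) (Fin dB) ℂ)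
    with hVdef
  have hV1 : V * star V = 1 := mem_unitaryGroup_iff.mp hH.eigenvectorUnitary.2
  have hV2 : star V * V = 1 := mem_unitaryGroup_iff'.mp hH.eigenvectorUnitary.2
  set u : Fin dB → Fin dB → ℂ := fun i => (fun a => V a i) with hu
  have hu_unit : ∀ i, star (u i) ⬝ᵥ u i = 1 := by
    intro i
    have := col_dot V V i
    rw [hV2] at this
    simpa using this.symm
  have hu_ne : ∀ i, u i ≠ 0 := by
    intro i h
    have := hu_unit i
    rw [h] at this
    simp at this
  set c : Fin dB → ℝ := fun i => (star (u i) ⬝ᵥ ω *ᵥ u i).re with hc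
  set d : Fin dB → ℝ := fun i => (star (u i) ⬝ᵥ ω⁻¹ *ᵥ u i).re with hd
  have hc_pos : ∀ i, 0 < c i := fun i => (Complex.lt_def.mp (hω.dotProduct_mulVec_pos (hu_ne i))).1
  have hcd : ∀ i, 1 ≤ c i * d i := fun i => cs_vec hω (u i) (hu_unit i)
  -- diagonalization of N
  set D : Matrix (Fin dB) (Fin dB) ℂ := diagonal (RCLike.ofReal ∘ μ) with hD
  have hspec : N = V * D * star V := hH.spectral_theorem
  have hNN : N * N = V * (D * (star V * V) * D) * star V := by
    rw [hspec]; simp only [Matrix.mul_assoc]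
  rw [hV2, mul_one] at hNN
  have htr1 : N * N * ω = V * (D * D * (star V * ω)) := by
    rw [hNN]; simp only [Matrix.mul_assoc]
  have htr2 : (N * N * ω).trace = (D * D * (star V * ω * V)).trace := by
    rw [htr1, Matrix.trace_mul_comm V (D * D * (star V * ω))]
    simp only [Matrix.mul_assoc]
  have hDD : D * D = diagonal (fun i => ((μ i : ℂ)) ^ 2) := by
    rw [hD, diagonal_mul_diagonal]
    congr 1; funext i; simp [pow_two]
  have htr3 : (N * N * ω).trace = ∑ i, ((μ i : ℂ)) ^ 2 * (star (u i) ⬝ᵥ ω *ᵥ u i) := by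
    rw [htr2, hDD]
    rw [Matrix.trace]
    congr 1; funext i
    rw [Matrix.diag_apply, Matrix.diagonal_mul, sandwich_diag V ω i]
  have htrRe : (N * N * ω).trace.re = ∑ i, μ i ^ 2 * c i := by
    rw [htr3, Complex.re_sum]
    refine Finset.sum_congr rfl fun i _ => ?_
    rw [show ((μ i : ℂ)) ^ 2 = ((μ i ^ 2 : ℝ) : ℂ) by push_cast; ring]
    rw [Complex.re_ofReal_mul]
  -- the nonzero eigenvalue set
  set K : Finset (Fin dB) := Finset.univ.filter (fun i => μ i ≠ 0) with hK
  have hKcard : K.card ≤ r := by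
    have h1 := hH.rank_eq_card_non_zero_eigs
    have h2 : Fintype.card {i // μ i ≠ 0} = K.card := Fintype.card_subtype _
    rw [h2] at h1
    rw [← h1]
    exact hrank
  have hμ_nonneg : ∀ i, 0 ≤ μ i := hN.eigenvalues_nonneg
  have htrsum : ∑ i, (μ i : ℂ) = 1 := by
    have : N.trace = D.trace := by
      rw [hspec, Matrix.trace_mul_comm (V * D) (star V), ← Matrix.mul_assoc, hV2, one_mul]
    rw [this] at htrN
    rw [← htrN, hD, Matrix.trace_diagonal]
    rfl
  have hμsum : ∑ i, μ i = 1 := by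
    have := congrArg Complex.re htrsum
    rw [Complex.re_sum] at this
    simpa using this
  have hKsum : ∑ i ∈ K, μ i = 1 := by
    rw [← hμsum]
    exact Finset.sum_filter_ne_zero Finset.univ
  have hKne : K.Nonempty := by
    by_contra h
    rw [Finset.not_nonempty_iff_eq_empty] at h
    rw [h, Finset.sum_empty] at hKsum
    norm_num at hKsum
  -- Cauchy-Schwarz on K
  have hcs := Finset.sum_mul_sq_le_sq_mul_sq K (fun i => μ i * Real.sqrt (c i))
    (fun i => 1 / Real.sqrt (c i))
  have hcs1 : ∑ i ∈ K, (μ i * Real.sqrt (c i)) * (1 / Real.sqrt (c i)) = 1 := by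
    have heach : ∀ i ∈ K, (μ i * Real.sqrt (c i)) * (1 / Real.sqrt (c i)) = μ i := by
      intro i _
      have hsne : Real.sqrt (c i) ≠ 0 := ne_of_gt (Real.sqrt_pos.mpr (hc_pos i))
      field_simp
    rw [Finset.sum_congr rfl heach, hKsum]
  have hcs2 : ∀ i, (μ i * Real.sqrt (c i)) ^ 2 = μ i ^ 2 * c i := by
    intro i
    rw [mul_pow, Real.sq_sqrt (hc_pos i).le]
  have hcs3 : ∀ i, (1 / Real.sqrt (c i)) ^ 2 = 1 / c i := by
    intro i
    rw [div_pow, one_pow, Real.sq_sqrt (hc_pos i).le]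
  rw [hcs1] at hcs
  simp only [hcs2, hcs3, one_pow] at hcs
  -- hcs : 1 ≤ (∑ i ∈ K, μ i ^ 2 * c i) * ∑ i ∈ K, 1 / c i
  -- Ky Fan bound : ∑ i ∈ K, d i ≤ S
  have hinv : (ω⁻¹).IsHermitian := hω.inv.1
  set Vw : Matrix (Fin dB) (Fin dB) ℂ := (hinv.eigenvectorUnitary : Matrix (Fin dB) (Fin dB) ℂ)
    with hVw
  have hVw1 : Vw * star Vw = 1 := mem_unitaryGroup_iff.mp hinv.eigenvectorUnitary.2
  have hVw2 : star Vw * Vw = 1 := mem_unitaryGroup_iff'.mp hinv.eigenvectorUnitary.2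
  set Λ : Matrix (Fin dB) (Fin dB) ℂ := diagonal (RCLike.ofReal ∘ lv) with hΛ
  have hspecω : ω⁻¹ = Vw * Λ * star Vw := hinv.spectral_theorem
  set W : Matrix (Fin dB) (Fin dB) ℂ := star Vw * V with hW
  have hWstar : star W = star V * Vw := by rw [hW, StarMul.star_mul, star_star]
  have hW1 : W * star W = 1 := by
    rw [hW, hWstar, Matrix.mul_assoc, ← Matrix.mul_assoc V, hV1, one_mul, hVw2]
  have hW2 : star W * W = 1 := by
    rw [hW, hWstar, Matrix.mul_assoc, ← Matrix.mul_assoc Vw, hVw1, one_mul, hV2]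
  have hsand : star V * ω⁻¹ * V = star W * Λ * W := by
    rw [hspecω, hWstar, hW]
    simp only [Matrix.mul_assoc]
  have hd_eq : ∀ i, d i = ∑ j, lv j * Complex.normSq (W j i) := by
    intro i
    show (star (u i) ⬝ᵥ ω⁻¹ *ᵥ u i).re = _
    have h1 : star (u i) ⬝ᵥ ω⁻¹ *ᵥ u i = (star V * ω⁻¹ * V) i i := (sandwich_diag V ω⁻¹ i).symm
    rw [h1, hsand, sandwich_diag W Λ i]
    exact diag_quadform lv (fun j => W j i)
  set t : Fin dB → ℝ := fun j => ∑ i ∈ K, Complex.normSq (W j i) with ht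
  have hrow : ∀ j, ∑ i, Complex.normSq (W j i) = 1 := by
    intro j
    have h1 : (W * star W) j j = 1 := by rw [hW1]; simp
    rw [Matrix.mul_apply] at h1
    have h2 : ∑ i, ((Complex.normSq (W j i) : ℝ) : ℂ) = 1 := by
      rw [← h1]
      refine Finset.sum_congr rfl fun i _ => ?_
      rw [Matrix.star_apply, show star (W j i) = (starRingEnd ℂ) (W j i) from rfl,
        Complex.mul_conj]
    have := congrArg Complex.re h2
    rw [Complex.re_sum] at this
    simpa using this
  have hcolnorm : ∀ i, ∑ j, Complex.normSq (W j i) = 1 := by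
    intro i
    have h1 : (star W * W) i i = 1 := by rw [hW2]; simp
    rw [Matrix.mul_apply] at h1
    have h2 : ∑ j, ((Complex.normSq (W j i) : ℝ) : ℂ) = 1 := by
      rw [← h1]
      refine Finset.sum_congr rfl fun j _ => ?_
      rw [Matrix.star_apply, show star (W j i) = (starRingEnd ℂ) (W j i) from rfl,
        mul_comm, Complex.mul_conj]
    have := congrArg Complex.re h2
    rw [Complex.re_sum] at this
    simpa using this
  have ht0 : ∀ j, 0 ≤ t j := fun j => Finset.sum_nonneg fun i _ => Complex.normSq_nonneg _
  have ht1 : ∀ j, t j ≤ 1 := by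
    intro j
    rw [ht]
    calc ∑ i ∈ K, Complex.normSq (W j i) ≤ ∑ i, Complex.normSq (W j i) :=
          Finset.sum_le_sum_of_subset_of_nonneg (Finset.subset_univ K)
            (fun i _ _ => Complex.normSq_nonneg _)
    _ = 1 := hrow j
  have hts : ∑ j, t j ≤ (r : ℝ) := by
    rw [ht]
    rw [Finset.sum_comm]
    have : ∑ i ∈ K, ∑ j, Complex.normSq (W j i) = (K.card : ℝ) := by
      rw [Finset.sum_congr rfl fun i _ => hcolnorm i]
      simp
    rw [this]
    exact_mod_cast hKcard
  have hlpos : ∀ j, 0 < lv j := fun j => hω.inv.eigenvalues_pos j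
  have hKyFan : ∑ j, lv j * t j ≤ S := kyfan_scalar hne hcard hlpos hswap t ht0 ht1 hts
  have hdsum : ∑ i ∈ K, d i ≤ S := by
    calc ∑ i ∈ K, d i = ∑ i ∈ K, ∑ j, lv j * Complex.normSq (W j i) :=
          Finset.sum_congr rfl fun i _ => hd_eq i
    _ = ∑ j, lv j * t j := by
        rw [Finset.sum_comm]
        exact Finset.sum_congr rfl fun j _ => by rw [ht, Finset.mul_sum]
    _ ≤ S := hKyFan
  -- combine
  have hd_pos : ∀ i, 0 < d i := fun i => (Complex.lt_def.mp (hω.inv.dotProduct_mulVec_pos (hu_ne i))).1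
  have hB_le : ∑ i ∈ K, 1 / c i ≤ S := by
    refine le_trans (Finset.sum_le_sum fun i _ => ?_) hdsum
    rw [div_le_iff₀ (hc_pos i)]
    linarith [hcd i, mul_comm (c i) (d i)]
  have hB_pos : 0 < ∑ i ∈ K, 1 / c i := by
    refine Finset.sum_pos (fun i _ => div_pos one_pos (hc_pos i)) hKne
  have hA_nonneg : 0 ≤ ∑ i ∈ K, μ i ^ 2 * c i :=
    Finset.sum_nonneg fun i _ => mul_nonneg (sq_nonneg _) (hc_pos i).le
  have hS_pos : 0 < S := lt_of_lt_of_le hB_pos hB_le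
  have hfin : 1 ≤ (∑ i ∈ K, μ i ^ 2 * c i) * S :=
    le_trans hcs (mul_le_mul_of_nonneg_left hB_le hA_nonneg)
  have hAK : ∑ i, μ i ^ 2 * c i = ∑ i ∈ K, μ i ^ 2 * c i := by
    symm
    refine Finset.sum_subset (Finset.subset_univ K) fun i _ hi => ?_
    have : μ i = 0 := by simpa [hK] using hi
    rw [this]; ring
  rw [htrRe, hAK, div_le_iff₀ hS_pos]
  exact hfin

lemma sum_eq_trace {dA dB : ℕ} (ω : Matrix (Fin dB) (Fin dB) ℂ) (ψ : Fin dA × Fin dB → ℂ) :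
    (∑ p, (starRingEnd ℂ) (ψ p) *
      (((Matrix.of fun a a' : Fin dA =>
          ∑ b, ψ (a, b) * (starRingEnd ℂ) (ψ (a', b))) ⊗ₖ ω).mulVec ψ) p)
    = (((Matrix.of fun b c : Fin dB => ∑ a, ψ (a, b) * (starRingEnd ℂ) (ψ (a, c)))
        * (Matrix.of fun b c : Fin dB => ∑ a, ψ (a, b) * (starRingEnd ℂ) (ψ (a, c)))
        * ω).trace) := by
  simp only [Matrix.trace, Matrix.diag_apply, Matrix.mul_apply, Matrix.mulVec, dotProduct,
    Matrix.kroneckerMap_apply, Matrix.of_apply, Fintype.sum_prod_type, Finset.mul_sum,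
    Finset.sum_mul]
  rw [show (∑ x : Fin dA, ∑ x_1 : Fin dB, ∑ x_2 : Fin dA, ∑ x_3 : Fin dB, ∑ x_4 : Fin dB,
      (starRingEnd ℂ) (ψ (x, x_1)) *
        (ψ (x, x_4) * (starRingEnd ℂ) (ψ (x_2, x_4)) * ω x_1 x_3 * ψ (x_2, x_3)))
    = ∑ q : Fin dA × Fin dB × Fin dA × Fin dB × Fin dB,
        (starRingEnd ℂ) (ψ (q.1, q.2.1)) *
          (ψ (q.1, q.2.2.2.2) * (starRingEnd ℂ) (ψ (q.2.2.1, q.2.2.2.2)) * ω q.2.1 q.2.2.2.1 *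
            ψ (q.2.2.1, q.2.2.2.1)) by
      rw [Fintype.sum_prod_type]
      refine Finset.sum_congr rfl fun a _ => ?_
      rw [Fintype.sum_prod_type]
      refine Finset.sum_congr rfl fun b _ => ?_
      rw [Fintype.sum_prod_type]
      refine Finset.sum_congr rfl fun a2 _ => ?_
      rw [Fintype.sum_prod_type]]
  rw [show (∑ x : Fin dB, ∑ x_1 : Fin dB, ∑ x_2 : Fin dB, ∑ x_3 : Fin dA, ∑ i : Fin dA,
      ψ (i, x) * (starRingEnd ℂ) (ψ (i, x_2)) * (ψ (x_3, x_2) * (starRingEnd ℂ) (ψ (x_3, x_1))) *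
        ω x_1 x)
    = ∑ q : Fin dB × Fin dB × Fin dB × Fin dA × Fin dA,
        ψ (q.2.2.2.2, q.1) * (starRingEnd ℂ) (ψ (q.2.2.2.2, q.2.2.1)) *
          (ψ (q.2.2.2.1, q.2.2.1) * (starRingEnd ℂ) (ψ (q.2.2.2.1, q.2.1))) * ω q.2.1 q.1 by
      rw [Fintype.sum_prod_type]
      refine Finset.sum_congr rfl fun x _ => ?_
      rw [Fintype.sum_prod_type]
      refine Finset.sum_congr rfl fun x1 _ => ?_
      rw [Fintype.sum_prod_type]
      refine Finset.sum_congr rfl fun x2 _ => ?_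
      rw [Fintype.sum_prod_type]]
  refine Fintype.sum_equiv
    ⟨fun q => (q.2.2.2.1, q.2.1, q.2.2.2.2, q.1, q.2.2.1),
     fun q => (q.2.2.2.1, q.2.1, q.2.2.2.2, q.1, q.2.2.1), ?_, ?_⟩ _ _ ?_
  · rintro ⟨a, b, a2, b3, b4⟩; rfl
  · rintro ⟨x, x1, x2, x3, i⟩; rfl
  · rintro ⟨a, b, a2, b3, b4⟩
    simp only [Equiv.coe_fn_mk]
    ring

lemma sum_dite_lt {M : Type*} [AddCommMonoid M] {dA r : ℕ} (hrA : r ≤ dA) (g : Fin r → M) :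
    ∑ a : Fin dA, (if h : (a : ℕ) < r then g ⟨a, h⟩ else 0) = ∑ i : Fin r, g i := by
  rw [Fin.sum_univ_eq_sum_range (fun n => if h : n < r then g ⟨n, h⟩ else 0) dA]
  rw [← Finset.sum_subset (Finset.range_subset_range.mpr hrA)
    (fun n _ hn => dif_neg (by simpa using hn))]
  rw [← Fin.sum_univ_eq_sum_range (fun n => if h : n < r then g ⟨n, h⟩ else 0) r]
  exact Finset.sum_congr rfl fun i _ => by rw [dif_pos i.2]

set_option maxHeartbeats 1000000 in
/-- The supremum over pure states `ψ` on `A ⊗ B` of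
`− log₂ Tr (|ψ⟩⟨ψ| (ψ_A ⊗ ω))` equals `log₂` of the sum of the
`min (dim A) (dim B)` largest eigenvalues of `ω⁻¹`. -/
theorem stmt11 (dA dB : ℕ) (hA : 0 < dA) (hB : 0 < dB)
    (ω : Matrix (Fin dB) (Fin dB) ℂ) (hω : ω.PosDef) (htr : ω.trace = 1) :
    IsGreatest
      {x : ℝ | ∃ ψ : Fin dA × Fin dB → ℂ, (∑ p, Complex.normSq (ψ p)) = 1 ∧
        x = - Real.logb 2
          ((∑ p, (starRingEnd ℂ) (ψ p) *
            (((Matrix.of fun a a' : Fin dA =>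
                ∑ b, ψ (a, b) * (starRingEnd ℂ) (ψ (a', b))) ⊗ₖ ω).mulVec ψ) p).re)}
      (Real.logb 2 (sSup {y : ℝ | ∃ s : Finset (Fin dB), s.card = min dA dB ∧
        y = ∑ j ∈ s, hω.inv.1.eigenvalues j})) := by
  classical
  set r : ℕ := min dA dB with hr
  have hr1 : 1 ≤ r := le_min hA hB
  have hrA : r ≤ dA := min_le_left _ _
  have hrB : r ≤ dB := min_le_right _ _
  set lv : Fin dB → ℝ := hω.inv.1.eigenvalues with hlv
  have hlpos : ∀ j, 0 < lv j := fun j => hω.inv.eigenvalues_pos j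
  obtain ⟨s₀, hcard, hmax, hsup⟩ := exists_max_finset (n := dB) (k := r) hrB lv
  have hswap := max_finset_swap hcard hmax
  have hne : s₀.Nonempty := Finset.card_pos.mp (by omega)
  rw [← hsup]
  set S : ℝ := ∑ j ∈ s₀, lv j with hS
  have hSpos : 0 < S := Finset.sum_pos (fun j _ => hlpos j) hne
  have hdet : IsUnit ω.det := isUnit_iff_ne_zero.2 (ne_of_gt hω.det_pos)
  -- shared facts about the eigenvector unitary of ω⁻¹
  set Vw : Matrix (Fin dB) (Fin dB) ℂ :=
    (hω.inv.1.eigenvectorUnitary : Matrix (Fin dB) (Fin dB) ℂ) with hVwdef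
  have hVw1 : Vw * star Vw = 1 := Matrix.mem_unitaryGroup_iff.mp hω.inv.1.eigenvectorUnitary.2
  have hVw2 : star Vw * Vw = 1 := Matrix.mem_unitaryGroup_iff'.mp hω.inv.1.eigenvectorUnitary.2
  constructor
  · -- membership : the optimal ψ
    set σ : Fin r ↪o Fin dB := s₀.orderEmbOfFin hcard with hσ
    set ν : Fin dB → ℝ := fun j => if j ∈ s₀ then lv j / S else 0 with hν
    have hν_nonneg : ∀ j, 0 ≤ ν j := by
      intro j; rw [hν]; dsimp only
      split_ifs with h
      · exact div_nonneg (hlpos j).le hSpos.le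
      · exact le_rfl
    have hνsum : ∑ j, ν j = 1 := by
      rw [hν]
      rw [Finset.sum_ite_mem, Finset.univ_inter, ← Finset.sum_div, ← hS, div_self hSpos.ne']
    set J : Matrix (Fin dA) (Fin dB) ℂ := Matrix.of fun (a : Fin dA) (j : Fin dB) =>
      if h : (a : ℕ) < r then (if σ ⟨a, h⟩ = j then ((Real.sqrt (ν j) : ℝ) : ℂ) else 0) else 0
      with hJ
    set M : Matrix (Fin dA) (Fin dB) ℂ := J * star Vw with hM
    set Δ : Matrix (Fin dB) (Fin dB) ℂ := Matrix.diagonal (fun j => ((ν j : ℝ) : ℂ)) with hΔ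
    have hJJ : Jᴴ * J = Δ := by
      ext j j'
      rw [Matrix.mul_apply]
      by_cases hjj : j = j'
      · subst hjj
        have : ∀ a : Fin dA, (Jᴴ) j a * J a j =
            (if h : (a : ℕ) < r then (if σ ⟨a, h⟩ = j then ((ν j : ℝ) : ℂ) else 0) else 0) := by
          intro a
          rw [Matrix.conjTranspose_apply, hJ]
          simp only [Matrix.of_apply]
          split_ifs with h1 h2
          · simp [Complex.star_def, Complex.conj_ofReal, ← Complex.ofReal_mul,
              Real.mul_self_sqrt (hν_nonneg j)]
          · simp
          · simp
        rw [Finset.sum_congr rfl fun a _ => this a]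
        rw [sum_dite_lt hrA (fun i => if σ i = j then ((ν j : ℝ) : ℂ) else 0)]
        by_cases hjs : j ∈ s₀
        · have hjrange : ∃ i : Fin r, σ i = j := by
            have := Finset.range_orderEmbOfFin s₀ hcard
            rw [Set.ext_iff] at this
            exact (this j).mpr hjs
          obtain ⟨i₀, hi₀⟩ := hjrange
          have : ∀ i : Fin r, (if σ i = j then ((ν j : ℝ) : ℂ) else 0)
              = (if i = i₀ then ((ν j : ℝ) : ℂ) else 0) := by
            intro i
            congr 1
            simp only [eq_iff_iff]
            constructor
            · intro h; exact σ.injective (h.trans hi₀.symm)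
            · intro h; rw [h, hi₀]
          rw [Finset.sum_congr rfl fun i _ => this i, Finset.sum_ite_eq' Finset.univ i₀]
          rw [hΔ, Matrix.diagonal_apply_eq]
          simp
        · have : ∀ i : Fin r, (if σ i = j then ((ν j : ℝ) : ℂ) else 0) = 0 := by
            intro i
            rw [if_neg]
            intro h
            exact hjs (h ▸ Finset.orderEmbOfFin_mem s₀ hcard i)
          rw [Finset.sum_congr rfl fun i _ => this i, Finset.sum_const, smul_zero]
          rw [hΔ, Matrix.diagonal_apply_eq]
          simp only [hν]
          simp [hjs]
      · have : ∀ a : Fin dA, (Jᴴ) j a * J a j' = 0 := by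
          intro a
          rw [Matrix.conjTranspose_apply, hJ]
          simp only [Matrix.of_apply]
          split_ifs <;> simp_all
        rw [Finset.sum_congr rfl fun a _ => this a, Finset.sum_const, smul_zero]
        rw [hΔ, Matrix.diagonal_apply_ne _ hjj]
    have hMM : Mᴴ * M = Vw * Δ * star Vw := by
      rw [hM, Matrix.conjTranspose_mul]
      have h1 : (star Vw)ᴴ = Vw := by
        rw [Matrix.star_eq_conjTranspose, Matrix.conjTranspose_conjTranspose]
      rw [h1]
      calc Vw * Jᴴ * (J * star Vw) = Vw * (Jᴴ * J) * star Vw := by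
            simp only [Matrix.mul_assoc]
      _ = Vw * Δ * star Vw := by rw [hJJ]
    have htrMM : (Mᴴ * M).trace = ((1 : ℝ) : ℂ) := by
      rw [hMM, Matrix.trace_mul_cycle, hVw2, one_mul, hΔ, Matrix.trace_diagonal,
        ← Complex.ofReal_sum, hνsum]
    have hnorm : ∑ p : Fin dA × Fin dB, Complex.normSq (M p.1 p.2) = 1 := by
      have h1 : (Mᴴ * M).trace
          = ((∑ p : Fin dA × Fin dB, Complex.normSq (M p.1 p.2) : ℝ) : ℂ) := by
        rw [Matrix.trace, Complex.ofReal_sum]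
        rw [show (∑ p : Fin dA × Fin dB, ((Complex.normSq (M p.1 p.2) : ℝ) : ℂ))
            = ∑ a : Fin dA, ∑ b : Fin dB, ((Complex.normSq (M a b) : ℝ) : ℂ) from
          Fintype.sum_prod_type (f := fun p : Fin dA × Fin dB =>
            ((Complex.normSq (M p.1 p.2) : ℝ) : ℂ))]
        rw [Finset.sum_comm]
        refine Finset.sum_congr rfl fun b _ => ?_
        rw [Matrix.diag_apply, Matrix.mul_apply]
        refine Finset.sum_congr rfl fun a _ => ?_
        rw [Matrix.conjTranspose_apply, mul_comm]
        exact Complex.mul_conj (M a b)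
      exact Complex.ofReal_inj.mp (h1.symm.trans htrMM)
    -- the key entry computation
    have hentry : ∀ j, (star Vw * ω * Vw) j j = (((lv j)⁻¹ : ℝ) : ℂ) := by
      intro j
      rw [sandwich_diag Vw ω j]
      set e : Fin dB → ℂ := fun b => Vw b j with he
      have hbasis : e = ⇑(hω.inv.1.eigenvectorBasis j) := by
        funext b
        rw [he]
        simp only [hVwdef]
        rw [Matrix.IsHermitian.eigenvectorUnitary_apply]
      have hinvmul : ω⁻¹ *ᵥ e = ((lv j : ℝ) : ℂ) • e := by
        have h0 := hω.inv.1.mulVec_eigenvectorBasis j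
        rw [RCLike.real_smul_eq_coe_smul (K := ℂ)] at h0
        rw [hbasis]
        exact h0
      have hid : (ω * ω⁻¹) *ᵥ e = e := by
        rw [Matrix.mul_nonsing_inv ω hdet, Matrix.one_mulVec]
      rw [← Matrix.mulVec_mulVec, hinvmul, Matrix.mulVec_smul] at hid
      have hωe : ω *ᵥ e = (((lv j : ℝ) : ℂ))⁻¹ • e := by
        have h4 := congrArg (fun v => (((lv j : ℝ) : ℂ))⁻¹ • v) hid
        simp only [smul_smul] at h4
        rw [show (((lv j : ℝ) : ℂ))⁻¹ * ((lv j : ℝ) : ℂ) = 1 by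
          rw [← Complex.ofReal_inv, ← Complex.ofReal_mul, inv_mul_cancel₀ (hlpos j).ne']
          simp, one_smul] at h4
        exact h4
      rw [hωe, dotProduct_smul]
      have hunit : star e ⬝ᵥ e = 1 := by
        have h3 := col_dot Vw Vw j
        rw [hVw2] at h3
        simpa [he] using h3.symm
      rw [hunit, smul_eq_mul, mul_one, Complex.ofReal_inv]
    have hreal : ∑ j, ν j ^ 2 * (lv j)⁻¹ = 1 / S := by
      rw [← Finset.sum_subset (Finset.subset_univ s₀)
        (fun j _ hj => by simp only [hν]; simp [hj])]
      have heach : ∀ j ∈ s₀, ν j ^ 2 * (lv j)⁻¹ = lv j / S ^ 2 := by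
        intro j hj
        simp only [hν]
        rw [if_pos hj, show (lv j / S) ^ 2 * (lv j)⁻¹
          = (lv j * lv j * (lv j)⁻¹) / S ^ 2 by ring, mul_inv_cancel_right₀ (hlpos j).ne']
      rw [Finset.sum_congr rfl heach, ← Finset.sum_div, ← hS, pow_two, ← div_div,
        div_self hSpos.ne']
    have hΔΔ : Δ * Δ = Matrix.diagonal (fun j => ((ν j : ℝ) : ℂ) ^ 2) := by
      rw [hΔ, Matrix.diagonal_mul_diagonal]
      exact congrArg _ (funext fun j => (pow_two _).symm)
    have hval : ((Mᴴ * M) * (Mᴴ * M) * ω).trace = ((1 / S : ℝ) : ℂ) := by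
      rw [hMM]
      have htr1 : (Vw * Δ * star Vw) * (Vw * Δ * star Vw) * ω
          = Vw * (Δ * (star Vw * Vw) * (Δ * (star Vw * ω))) := by
        simp only [Matrix.mul_assoc]
      rw [htr1, hVw2, mul_one, Matrix.trace_mul_comm Vw _]
      rw [show (Δ * (Δ * (star Vw * ω))) * Vw = (Δ * Δ) * (star Vw * ω * Vw) by
        simp only [Matrix.mul_assoc]]
      rw [hΔΔ, Matrix.trace]
      rw [show ∀ (P : Matrix (Fin dB) (Fin dB) ℂ),
          ∑ j, (Matrix.diagonal (fun j => ((ν j : ℝ) : ℂ) ^ 2) * P).diag j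
          = ∑ j, ((ν j : ℝ) : ℂ) ^ 2 * P j j from fun P =>
        Finset.sum_congr rfl fun j _ => by rw [Matrix.diag_apply, Matrix.diagonal_mul]]
      rw [Finset.sum_congr rfl fun j _ => by rw [hentry j]]
      rw [← hreal, Complex.ofReal_sum]
      refine Finset.sum_congr rfl fun j _ => ?_
      push_cast
      ring
    refine ⟨fun p => (starRingEnd ℂ) (M p.1 p.2), ?_, ?_⟩
    · simp only [Complex.normSq_conj]
      exact hnorm
    · rw [sum_eq_trace ω (fun p => (starRingEnd ℂ) (M p.1 p.2))]
      have hNψ : (Matrix.of fun b c : Fin dB =>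
          ∑ a, (fun p : Fin dA × Fin dB => (starRingEnd ℂ) (M p.1 p.2)) (a, b) *
            (starRingEnd ℂ) ((fun p : Fin dA × Fin dB => (starRingEnd ℂ) (M p.1 p.2)) (a, c)))
          = Mᴴ * M := by
        ext b c
        simp only [Matrix.of_apply, Matrix.mul_apply, Matrix.conjTranspose_apply,
          Complex.conj_conj]
        rfl
      rw [hNψ, hval, Complex.ofReal_re, one_div, Real.logb_inv, neg_neg]
  · -- upper bound
    rintro x ⟨ψ, hψ, rfl⟩
    set N : Matrix (Fin dB) (Fin dB) ℂ :=
      Matrix.of fun b c : Fin dB => ∑ a, ψ (a, b) * (starRingEnd ℂ) (ψ (a, c)) with hN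
    have hsum := sum_eq_trace ω ψ
    set M : Matrix (Fin dA) (Fin dB) ℂ :=
      Matrix.of fun a b => (starRingEnd ℂ) (ψ (a, b)) with hMdef
    have hNM : N = Mᴴ * M := by
      ext b c
      rw [hN, hMdef]
      simp only [Matrix.of_apply, Matrix.mul_apply, Matrix.conjTranspose_apply, Matrix.of_apply]
      refine Finset.sum_congr rfl fun a _ => ?_
      simp [mul_comm]
    have hPSD : N.PosSemidef := by rw [hNM]; exact Matrix.posSemidef_conjTranspose_mul_self M
    have htrN : N.trace = 1 := by
      rw [Matrix.trace]
      have : ∀ b, N.diag b = ((∑ a, Complex.normSq (ψ (a, b)) : ℝ) : ℂ) := by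
        intro b
        rw [Matrix.diag_apply, hN]
        simp only [Matrix.of_apply]
        rw [Complex.ofReal_sum]
        exact Finset.sum_congr rfl fun a _ => (Complex.mul_conj (ψ (a, b)))
      rw [Finset.sum_congr rfl fun b _ => this b, ← Complex.ofReal_sum]
      rw [Finset.sum_comm]
      rw [show ∑ a : Fin dA, ∑ b : Fin dB, Complex.normSq (ψ (a, b))
          = ∑ p : Fin dA × Fin dB, Complex.normSq (ψ p) from
        (Fintype.sum_prod_type (f := fun p : Fin dA × Fin dB => Complex.normSq (ψ p))).symm]
      rw [hψ]
      norm_num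
    have hrank : N.rank ≤ r := by
      rw [hNM, Matrix.rank_conjTranspose_mul_self]
      refine le_min ?_ ?_
      · exact le_trans M.rank_le_card_height (by simp)
      · exact le_trans M.rank_le_card_width (by simp)
    have hT := trace_lower_bound hω hne hcard hswap hPSD htrN hrank
    rw [hsum]
    have hT' : 1 / S ≤ (N * N * ω).trace.re := hT
    have hTpos : 0 < (N * N * ω).trace.re := lt_of_lt_of_le (by positivity) hT'
    have h1 : Real.logb 2 S⁻¹ ≤ Real.logb 2 ((N * N * ω).trace.re) := by
      refine (Real.logb_le_logb (by norm_num) (by positivity) hTpos).mpr ?_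
      rw [← one_div]; exact hT'
    rw [Real.logb_inv] at h1
    linarith
end

section
/- Pimsner–Popa index formula for a single block: let A, B be finite-dimensional Hilbert spaces and define E(ρ) = ρ_A ⊗ (1_B/d_B) for states ρ on A⊗B. Then the infimum of constants c > 0 such that ρ ≤ c·E(ρ) for all states ρ equals min(d_A, d_B) · d_B. -/
open ComplexOrder

open Kronecker

noncomputable section
open Matrix
namespace PP

def nsq {m n : Type*} [Fintype m] [Fintype n] (P : Matrix m n ℂ) : ℝ :=
  ∑ i, ∑ j, Complex.normSq (P i j)

lemma nsq_nonneg {m n : Type*} [Fintype m] [Fintype n] (P : Matrix m n ℂ) : 0 ≤ nsq P :=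
  Finset.sum_nonneg fun _ _ => Finset.sum_nonneg fun _ _ => Complex.normSq_nonneg _

lemma csC {ι : Type*} (s : Finset ι) (f g : ι → ℂ) :
    Complex.normSq (∑ i ∈ s, f i * g i) ≤ (∑ i ∈ s, Complex.normSq (f i)) * (∑ i ∈ s, Complex.normSq (g i)) := by
  have h1 : ‖∑ i ∈ s, f i * g i‖ ≤ ∑ i ∈ s, ‖f i‖ * ‖g i‖ := by
    refine le_trans (norm_sum_le _ _) ?_
    simp [le_refl]
  have h2 : (∑ i ∈ s, ‖f i‖ * ‖g i‖) ^ 2 ≤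
      (∑ i ∈ s, ‖f i‖ ^ 2) * (∑ i ∈ s, ‖g i‖ ^ 2) :=
    Finset.sum_mul_sq_le_sq_mul_sq s _ _
  calc Complex.normSq (∑ i ∈ s, f i * g i)
      = ‖∑ i ∈ s, f i * g i‖ ^ 2 := (Complex.sq_norm _).symm
    _ ≤ (∑ i ∈ s, ‖f i‖ * ‖g i‖) ^ 2 := by
        apply pow_le_pow_left₀ (norm_nonneg _) h1
    _ ≤ (∑ i ∈ s, ‖f i‖ ^ 2) * (∑ i ∈ s, ‖g i‖ ^ 2) := h2
    _ = _ := by simp [Complex.sq_norm]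

lemma traceBound_dim {n : ℕ} (K : Matrix (Fin n) (Fin n) ℂ) :
    Complex.normSq K.trace ≤ (n : ℝ) * nsq K := by
  have h := csC Finset.univ (fun _ : Fin n => (1:ℂ)) (fun b => K b b)
  simp only [one_mul, Complex.normSq_one] at h
  have h2 : (∑ b : Fin n, Complex.normSq (K b b)) ≤ nsq K := by
    apply Finset.sum_le_sum
    intro b _
    exact Finset.single_le_sum (f := fun b' => Complex.normSq (K b b')) (fun _ _ => Complex.normSq_nonneg _) (Finset.mem_univ b)
  calc Complex.normSq K.trace = Complex.normSq (∑ b, K b b) := by rw [Matrix.trace]; rfl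
    _ ≤ (∑ _b : Fin n, (1:ℝ)) * ∑ b, Complex.normSq (K b b) := h
    _ = (n:ℝ) * ∑ b, Complex.normSq (K b b) := by simp
    _ ≤ (n:ℝ) * nsq K := by
        apply mul_le_mul_of_nonneg_left h2 (by positivity)

lemma trace_conjTranspose_mul_self {m n : Type*} [Fintype m] [Fintype n]
    (P : Matrix m n ℂ) : (Pᴴ * P).trace = (nsq P : ℂ) := by
  rw [Matrix.trace, nsq]
  push_cast
  rw [Finset.sum_comm]
  simp only [Matrix.diag, Matrix.mul_apply, Matrix.conjTranspose_apply]
  congr 1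
  ext j
  congr 1
  ext i
  rw [Complex.normSq_eq_conj_mul_self]
  rfl

lemma trace_CS {m n : Type*} [Fintype m] [Fintype n] (P Q : Matrix m n ℂ) :
    Complex.normSq (Pᴴ * Q).trace ≤ nsq P * nsq Q := by
  have key : (Pᴴ * Q).trace = ∑ p : n × m, (starRingEnd ℂ) (P p.2 p.1) * Q p.2 p.1 := by
    rw [Matrix.trace]
    simp only [Matrix.diag, Matrix.mul_apply, Matrix.conjTranspose_apply]
    rw [Fintype.sum_prod_type]
    rfl
  rw [key]
  have := csC Finset.univ (fun p : n × m => (starRingEnd ℂ) (P p.2 p.1)) (fun p : n × m => Q p.2 p.1)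
  refine le_trans this (le_of_eq ?_)
  congr 1
  · rw [Fintype.sum_prod_type, Finset.sum_comm, nsq]
    simp [Complex.normSq_conj]
  · rw [Fintype.sum_prod_type, Finset.sum_comm, nsq]

lemma smul_one_posDef {d : ℕ} {ε : ℝ} (hε : 0 < ε) :
    ((ε:ℂ) • (1 : Matrix (Fin d) (Fin d) ℂ)).PosDef := by
  refine Matrix.PosDef.of_dotProduct_mulVec_pos ?_ ?_
  · rw [Matrix.IsHermitian, Matrix.conjTranspose_smul, Matrix.conjTranspose_one]
    congr 1
    simp [Complex.star_def, Complex.conj_ofReal]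
  · intro x hx
    rw [Matrix.smul_mulVec, Matrix.one_mulVec, dotProduct_smul]
    have h1 : 0 < (ε:ℂ) := by exact_mod_cast Complex.zero_lt_real.mpr hε
    have h2 : 0 < dotProduct (star x) x := Matrix.dotProduct_star_self_pos_iff.mpr hx
    rw [smul_eq_mul]
    exact mul_pos h1 h2

lemma posSemidef_diag_nonneg {d : ℕ} {A : Matrix (Fin d) (Fin d) ℂ} (hA : A.PosSemidef)
    (i : Fin d) : 0 ≤ A i i := by
  have := hA.dotProduct_mulVec_nonneg (Pi.single i 1)
  simpa [dotProduct, Matrix.mulVec, Pi.single_apply] using this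

lemma posSemidef_trace_nonneg {d : ℕ} {A : Matrix (Fin d) (Fin d) ℂ} (hA : A.PosSemidef) :
    0 ≤ A.trace :=
  Finset.sum_nonneg fun i _ => posSemidef_diag_nonneg hA i

lemma traceBound_rank_eps {dA dB : ℕ} (M N : Matrix (Fin dA) (Fin dB) ℂ) {ε : ℝ} (hε : 0 < ε) :
    Complex.normSq ((Mᴴ * N).trace) ≤ (dA : ℝ) * (nsq (Mᴴ * N) + ε * nsq N) := by
  set G : Matrix (Fin dA) (Fin dA) ℂ := M * Mᴴ + (ε:ℂ) • 1 with hGdef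
  have hG : G.PosDef :=
    Matrix.PosDef.posSemidef_add (Matrix.posSemidef_self_mul_conjTranspose M) (smul_one_posDef hε)
  have hGu : IsUnit G.det := (Matrix.isUnit_iff_isUnit_det G).mp hG.isUnit
  have hGinv : (G⁻¹).PosDef := hG.inv
  have hGinvH : (G⁻¹)ᴴ = G⁻¹ := hG.isHermitian.inv
  set r : ℂ := ((Real.sqrt ε : ℝ) : ℂ) with hr
  have hrr : r * r = (ε : ℂ) := by
    rw [hr]; norm_cast; exact Real.mul_self_sqrt hε.le
  set L : Matrix (Fin dB ⊕ Fin dA) (Fin dA) ℂ := Matrix.fromRows Mᴴ (r • 1) with hL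
  have hLL : Lᴴ * L = G := by
    rw [hL, Matrix.conjTranspose_fromRows_eq_fromCols_conjTranspose,
      Matrix.fromCols_mul_fromRows, Matrix.conjTranspose_conjTranspose,
      Matrix.conjTranspose_smul, Matrix.conjTranspose_one]
    have hstar : star r = r := by rw [hr]; exact Complex.conj_ofReal _
    rw [hstar, Matrix.smul_mul, Matrix.mul_smul, Matrix.one_mul, smul_smul, hrr, hGdef]
  set X : Matrix (Fin dA) (Fin dB) ℂ := G⁻¹ * M with hX
  have hXH : Xᴴ = Mᴴ * G⁻¹ := by rw [hX, Matrix.conjTranspose_mul, hGinvH]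
  have claim : Mᴴ * N = (L * X)ᴴ * (L * N) := by
    rw [Matrix.conjTranspose_mul, Matrix.mul_assoc, ← Matrix.mul_assoc Lᴴ L N, hLL, hXH,
      Matrix.mul_assoc, ← Matrix.mul_assoc G⁻¹ G N, Matrix.nonsing_inv_mul G hGu,
      Matrix.one_mul]
  have main : Complex.normSq ((Mᴴ * N).trace) ≤ nsq (L * X) * nsq (L * N) := by
    rw [claim]; exact trace_CS _ _
  have bound1 : nsq (L * X) ≤ (dA : ℝ) := by
    have e1 : ((nsq (L * X) : ℝ) : ℂ) = ((dA:ℝ):ℂ) - (ε:ℂ) * (G⁻¹).trace := by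
      rw [← trace_conjTranspose_mul_self (L * X)]
      rw [Matrix.conjTranspose_mul, Matrix.mul_assoc, ← Matrix.mul_assoc Lᴴ L X, hLL, hXH]
      have s1 : G * X = M := by
        rw [hX, ← Matrix.mul_assoc, Matrix.mul_nonsing_inv G hGu, Matrix.one_mul]
      rw [s1, Matrix.mul_assoc]
      have e3 : (Mᴴ * (G⁻¹ * M)).trace = (G⁻¹ * (M * Mᴴ)).trace := by
        rw [← Matrix.mul_assoc, Matrix.trace_mul_comm, ← Matrix.mul_assoc]
        exact Matrix.trace_mul_comm _ _
      rw [e3]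
      have e4 : M * Mᴴ = G - (ε:ℂ) • 1 := by rw [hGdef, add_sub_cancel_right]
      rw [e4, Matrix.mul_sub, Matrix.trace_sub, Matrix.mul_smul,
        Matrix.mul_one, Matrix.nonsing_inv_mul G hGu, Matrix.trace_one, Matrix.trace_smul]
      simp [Fintype.card_fin, smul_eq_mul]
    have htr : 0 ≤ (G⁻¹).trace := posSemidef_trace_nonneg hGinv.posSemidef
    have htr_re : 0 ≤ ((G⁻¹).trace).re ∧ ((G⁻¹).trace).im = 0 := by
      rw [Complex.le_def] at htr
      exact ⟨by simpa using htr.1, by simpa using htr.2.symm⟩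
    have e2 := congrArg Complex.re e1
    simp only [Complex.ofReal_re, Complex.sub_re, Complex.mul_re, Complex.ofReal_im,
      Complex.ofReal_re] at e2
    rw [e2]
    nlinarith [htr_re.1, htr_re.2, hε]
  have bound2 : nsq (L * N) = nsq (Mᴴ * N) + ε * nsq N := by
    have e1 : ((nsq (L * N) : ℝ) : ℂ) = ((nsq (Mᴴ * N) + ε * nsq N : ℝ) : ℂ) := by
      rw [← trace_conjTranspose_mul_self (L * N)]
      rw [Matrix.conjTranspose_mul, Matrix.mul_assoc, ← Matrix.mul_assoc Lᴴ L N, hLL, hGdef]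
      rw [Matrix.add_mul, Matrix.mul_add, Matrix.trace_add]
      have f1 : Nᴴ * (M * Mᴴ * N) = (Mᴴ * N)ᴴ * (Mᴴ * N) := by
        rw [Matrix.conjTranspose_mul, Matrix.conjTranspose_conjTranspose,
          Matrix.mul_assoc, Matrix.mul_assoc]
      have f2 : (Nᴴ * ((ε:ℂ) • (1 : Matrix (Fin dA) (Fin dA) ℂ) * N)).trace = (ε:ℂ) * (Nᴴ * N).trace := by
        rw [Matrix.smul_mul, Matrix.one_mul, Matrix.mul_smul, Matrix.trace_smul, smul_eq_mul]
      rw [f1, f2, trace_conjTranspose_mul_self, trace_conjTranspose_mul_self]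
      push_cast
      ring
    exact_mod_cast e1
  calc Complex.normSq ((Mᴴ * N).trace) ≤ nsq (L * X) * nsq (L * N) := main
    _ ≤ (dA:ℝ) * nsq (L * N) := mul_le_mul_of_nonneg_right bound1 (nsq_nonneg _)
    _ = (dA:ℝ) * (nsq (Mᴴ * N) + ε * nsq N) := by rw [bound2]

lemma traceBound_rank {dA dB : ℕ} (M N : Matrix (Fin dA) (Fin dB) ℂ) :
    Complex.normSq ((Mᴴ * N).trace) ≤ (dA : ℝ) * nsq (Mᴴ * N) := by
  apply le_of_forall_pos_le_add
  intro δ hδ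
  have hpos : (0:ℝ) < (dA:ℝ) * nsq N + 1 := by
    have := nsq_nonneg N
    positivity
  set ε : ℝ := δ / ((dA:ℝ) * nsq N + 1) with hε
  have hεpos : 0 < ε := div_pos hδ hpos
  have h := traceBound_rank_eps M N hεpos
  have h2 : (dA:ℝ) * (nsq (Mᴴ * N) + ε * nsq N) ≤ (dA:ℝ) * nsq (Mᴴ * N) + δ := by
    have key : (dA:ℝ) * (ε * nsq N) ≤ δ := by
      rw [hε, div_mul_eq_mul_div, mul_div_assoc', div_le_iff₀ hpos]
      have hd0 : (0:ℝ) ≤ (dA:ℝ) := Nat.cast_nonneg _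
      nlinarith [nsq_nonneg N, hδ.le]
    nlinarith
  linarith

lemma keyBound {dA dB : ℕ} (M N : Matrix (Fin dA) (Fin dB) ℂ) :
    Complex.normSq ((Mᴴ * N).trace) ≤ ((min dA dB : ℕ) : ℝ) * nsq (Mᴴ * N) := by
  rcases le_total dA dB with h | h
  · rw [min_eq_left h]
    exact traceBound_rank M N
  · rw [min_eq_right h]
    exact traceBound_dim (Mᴴ * N)

lemma quad_kron {dA dB : ℕ} (A : Matrix (Fin dA) (Fin dA) ℂ) (x : Fin dA × Fin dB → ℂ) :
    dotProduct (star x) ((Matrix.kroneckerMap (· * ·) A (1 : Matrix (Fin dB) (Fin dB) ℂ)) *ᵥ x)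
      = ∑ b : Fin dB, dotProduct (star fun a => x (a,b)) (A *ᵥ (fun a => x (a,b))) := by
  simp only [dotProduct, Matrix.mulVec, Matrix.kroneckerMap_apply, Pi.star_apply,
    Matrix.one_apply]
  rw [Fintype.sum_prod_type, Finset.sum_comm]
  apply Finset.sum_congr rfl; intro b _
  apply Finset.sum_congr rfl; intro a _
  congr 1
  rw [Fintype.sum_prod_type]
  apply Finset.sum_congr rfl; intro a' _
  simp [mul_ite, ite_mul, Finset.sum_ite_eq]

lemma quad_CTC {ι κ : Type*} [Fintype ι] [Fintype κ] (C : Matrix ι κ ℂ) (y : κ → ℂ) :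
    dotProduct (star y) ((Cᴴ * C) *ᵥ y) = ∑ i, star ((C *ᵥ y) i) * ((C *ᵥ y) i) := by
  rw [← Matrix.mulVec_mulVec, Matrix.dotProduct_mulVec, Matrix.vecMul_conjTranspose, star_star]
  simp [dotProduct]


lemma dot_sum_mulVec {ι κ : Type*} [Fintype ι] (s : Finset κ) (M : κ → Matrix ι ι ℂ) (y : ι → ℂ) :
    dotProduct (star y) ((∑ j ∈ s, M j) *ᵥ y) = ∑ j ∈ s, dotProduct (star y) ((M j) *ᵥ y) := by
  induction s using Finset.cons_induction with
  | empty => simp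
  | cons a s ha ih =>
      rw [Finset.sum_cons, Finset.sum_cons, Matrix.add_mulVec, dotProduct_add, ih]

lemma membership {dA dB : ℕ} (hA : 0 < dA) (hB : 0 < dB)
    (ρ : Matrix (Fin dA × Fin dB) (Fin dA × Fin dB) ℂ) (hρ : ρ.PosSemidef) :
    (((min dA dB : ℝ) * (dB : ℝ)) • ((Matrix.of fun a a' : Fin dA => ∑ b, ρ (a, b) (a', b)) ⊗ₖ
        (((dB : ℂ)⁻¹) • (1 : Matrix (Fin dB) (Fin dB) ℂ))) - ρ).PosSemidef := by
  set c : ℝ := (min dA dB : ℝ) * (dB : ℝ) with hc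
  set ρA : Matrix (Fin dA) (Fin dA) ℂ := Matrix.of fun a a' : Fin dA => ∑ b, ρ (a, b) (a', b) with hρA
  have hρAH : ρA.IsHermitian := by
    rw [Matrix.IsHermitian]
    ext a a'
    rw [Matrix.conjTranspose_apply, hρA]
    simp only [Matrix.of_apply, star_sum]
    apply Finset.sum_congr rfl
    intro b _
    rw [← Matrix.conjTranspose_apply, hρ.1]
  have hkronH : (ρA ⊗ₖ (((dB : ℂ)⁻¹) • (1 : Matrix (Fin dB) (Fin dB) ℂ))).IsHermitian := by
    rw [Matrix.IsHermitian]
    ext p q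
    rw [Matrix.conjTranspose_apply]
    simp only [Matrix.kroneckerMap_apply, Matrix.smul_apply, Matrix.one_apply, star_mul']
    rw [← Matrix.conjTranspose_apply, hρAH]
    congr 1
    have hs : star ((dB:ℂ)⁻¹) = (dB:ℂ)⁻¹ := by
      rw [star_inv₀]
      norm_cast
    rw [star_smul, hs]
    congr 1
    by_cases h : q.2 = p.2
    · rw [if_pos h, if_pos h.symm, star_one]
    · rw [if_neg h, if_neg (fun hh => h hh.symm), star_zero]
  have hDH : ((c : ℝ) • (ρA ⊗ₖ (((dB : ℂ)⁻¹) • (1 : Matrix (Fin dB) (Fin dB) ℂ))) - ρ).IsHermitian := by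
    apply Matrix.IsHermitian.sub _ hρ.1
    rw [Matrix.IsHermitian]
    ext p q
    rw [Matrix.conjTranspose_apply, Matrix.smul_apply, Matrix.smul_apply, star_smul, star_trivial,
      ← Matrix.conjTranspose_apply, hkronH]
  refine Matrix.PosSemidef.of_dotProduct_mulVec_nonneg hDH ?_
  intro x
  obtain ⟨B, hρB⟩ : ∃ B : Matrix (Fin dA × Fin dB) (Fin dA × Fin dB) ℂ, ρ = Bᴴ * B := by
    open scoped MatrixOrder in
    refine ⟨CFC.sqrt ρ, ?_⟩
    open scoped MatrixOrder in
    rw [(CFC.sqrt_nonneg ρ).posSemidef.1.eq, CFC.sqrt_mul_sqrt_self ρ hρ.nonneg]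
  set Kf : (Fin dA × Fin dB) → Fin dB → Fin dB → ℂ :=
    fun k b b' => ∑ a, B k (a,b) * x (a,b') with hKf
  set KM : (Fin dA × Fin dB) → Matrix (Fin dB) (Fin dB) ℂ :=
    fun k => Matrix.of (Kf k) with hKM
  -- T2
  have hT2 : dotProduct (star x) (ρ *ᵥ x) = ∑ k, star ((B *ᵥ x) k) * ((B *ᵥ x) k) := by
    rw [hρB, ← Matrix.mulVec_mulVec, Matrix.dotProduct_mulVec, Matrix.vecMul_conjTranspose,
      star_star]
    simp [dotProduct]
  have hBx : ∀ k, (B *ᵥ x) k = (KM k).trace := by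
    intro k
    rw [Matrix.mulVec, dotProduct, Fintype.sum_prod_type, Finset.sum_comm, Matrix.trace]
    rfl
  -- decomposition of ρA
  set C : Fin dB → Matrix (Fin dA × Fin dB) (Fin dA) ℂ :=
    fun b'' => Matrix.of fun k a => B k (a, b'') with hC
  have hρAdec : ρA = ∑ b'', (C b'')ᴴ * (C b'') := by
    ext a a'
    rw [hρA]
    simp only [Matrix.of_apply, Matrix.sum_apply, Matrix.mul_apply, Matrix.conjTranspose_apply,
      hρB, hC]
  -- T1
  have hT1 : dotProduct (star x)
      ((Matrix.kroneckerMap (· * ·) ρA (1 : Matrix (Fin dB) (Fin dB) ℂ)) *ᵥ x)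
      = ∑ k, ∑ b'', ∑ b, star (Kf k b'' b) * Kf k b'' b := by
    rw [quad_kron]
    have step1 : ∀ b : Fin dB,
        dotProduct (star fun a => x (a,b)) (ρA *ᵥ (fun a => x (a,b)))
        = ∑ b'', ∑ k, star (Kf k b'' b) * Kf k b'' b := by
      intro b
      rw [hρAdec, dot_sum_mulVec]
      apply Finset.sum_congr rfl
      intro b'' _
      rw [quad_CTC]
      apply Finset.sum_congr rfl
      intro k _
      have : (C b'' *ᵥ fun a => x (a,b)) k = Kf k b'' b := by
        rw [Matrix.mulVec, dotProduct]; rfl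
      rw [this]
    calc (∑ b, dotProduct (star fun a => x (a,b)) (ρA *ᵥ (fun a => x (a,b))))
        = ∑ b, ∑ b'', ∑ k, star (Kf k b'' b) * Kf k b'' b := by
          exact Finset.sum_congr rfl fun b _ => step1 b
      _ = ∑ b'', ∑ b, ∑ k, star (Kf k b'' b) * Kf k b'' b := Finset.sum_comm
      _ = ∑ b'', ∑ k, ∑ b, star (Kf k b'' b) * Kf k b'' b := by
          exact Finset.sum_congr rfl fun _ _ => Finset.sum_comm
      _ = ∑ k, ∑ b'', ∑ b, star (Kf k b'' b) * Kf k b'' b := Finset.sum_comm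
  -- assemble
  have hsmul : ρA ⊗ₖ (((dB : ℂ)⁻¹) • (1 : Matrix (Fin dB) (Fin dB) ℂ))
      = ((dB : ℂ)⁻¹) • (Matrix.kroneckerMap (· * ·) ρA (1 : Matrix (Fin dB) (Fin dB) ℂ)) :=
    Matrix.kronecker_smul _ _ _
  have expand : dotProduct (star x)
      ((((c : ℝ) • (ρA ⊗ₖ (((dB : ℂ)⁻¹) • (1 : Matrix (Fin dB) (Fin dB) ℂ))) - ρ)) *ᵥ x)
      = ((min dA dB : ℕ) : ℂ) * (∑ k, ∑ b'', ∑ b, star (Kf k b'' b) * Kf k b'' b)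
        - ∑ k, star ((B *ᵥ x) k) * ((B *ᵥ x) k) := by
    rw [Matrix.sub_mulVec, dotProduct_sub, hT2, hsmul]
    rw [Matrix.smul_mulVec, Matrix.smul_mulVec, dotProduct_smul,
      dotProduct_smul, hT1]
    congr 1
    rw [Complex.real_smul, smul_eq_mul, ← mul_assoc]
    congr 1
    have hcR : c * (dB:ℝ)⁻¹ = ((min dA dB : ℕ) : ℝ) := by
      rw [hc, mul_assoc, mul_inv_cancel₀ (by exact_mod_cast hB.ne' : (dB:ℝ) ≠ 0), mul_one,
        Nat.cast_min]
    calc ((c:ℝ):ℂ) * ((dB:ℂ))⁻¹ = ((c * (dB:ℝ)⁻¹ : ℝ) : ℂ) := by push_cast; ring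
      _ = ((min dA dB : ℕ) : ℂ) := by rw [hcR]; norm_cast
  rw [expand]
  have perk : ∀ k, ((min dA dB : ℕ) : ℂ) * (∑ b'', ∑ b, star (Kf k b'' b) * Kf k b'' b)
      - star ((B *ᵥ x) k) * ((B *ᵥ x) k)
      = ((((min dA dB : ℕ) : ℝ) * nsq (KM k) - Complex.normSq ((KM k).trace) : ℝ) : ℂ) := by
    intro k
    have e1 : (∑ b'', ∑ b, star (Kf k b'' b) * Kf k b'' b) = ((nsq (KM k) : ℝ) : ℂ) := by
      rw [nsq]
      push_cast
      apply Finset.sum_congr rfl; intro b'' _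
      apply Finset.sum_congr rfl; intro b _
      rw [Complex.normSq_eq_conj_mul_self]
      rfl
    have e2 : star ((B *ᵥ x) k) * ((B *ᵥ x) k) = ((Complex.normSq ((KM k).trace) : ℝ) : ℂ) := by
      rw [hBx k, Complex.normSq_eq_conj_mul_self]
      rfl
    rw [e1, e2, Complex.ofReal_sub, Complex.ofReal_mul, Complex.ofReal_natCast]
  have keyk : ∀ k, (0:ℝ) ≤ ((min dA dB : ℕ) : ℝ) * nsq (KM k) - Complex.normSq ((KM k).trace) := by
    intro k
    have hMN : KM k = (Matrix.of fun a b => star (B k (a,b)))ᴴ * (Matrix.of fun a b => x (a,b)) := by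
      ext b b'
      simp only [hKM, hKf, Matrix.of_apply, Matrix.mul_apply, Matrix.conjTranspose_apply,
        star_star]
    rw [hMN]
    have := keyBound (Matrix.of fun a b => star (B k (a,b))) (Matrix.of fun a b => x (a,b))
    linarith
  rw [Finset.mul_sum, ← Finset.sum_sub_distrib]
  have : ∀ k ∈ Finset.univ, (0:ℂ) ≤ ((min dA dB : ℕ) : ℂ) * (∑ b'', ∑ b, star (Kf k b'' b) * Kf k b'' b)
      - star ((B *ᵥ x) k) * ((B *ᵥ x) k) := by
    intro k _
    rw [perk k]
    rw [Complex.zero_le_real]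
    exact keyk k
  exact Finset.sum_nonneg this

lemma count_lemma {dA dB : ℕ} :
    (∑ a : Fin dA, if (a:ℕ) < dB then (1:ℂ) else 0) = ((min dA dB : ℕ) : ℂ) := by
  rw [Fin.sum_univ_eq_sum_range (fun i => if i < dB then (1:ℂ) else 0) dA]
  rw [← Finset.sum_filter]
  have : (Finset.range dA).filter (fun i => i < dB) = Finset.range (min dA dB) := by
    ext i
    simp only [Finset.mem_filter, Finset.mem_range, lt_min_iff]
  rw [this, Finset.sum_const, Finset.card_range, nsmul_eq_mul, mul_one]

lemma inner_lemma {dA dB : ℕ} (a : Fin dA) :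
    (∑ b : Fin dB, if (a:ℕ) = (b:ℕ) then (1:ℂ) else 0) = if (a:ℕ) < dB then 1 else 0 := by
  by_cases h : (a:ℕ) < dB
  · rw [if_pos h, Finset.sum_eq_single (⟨(a:ℕ), h⟩ : Fin dB)]
    · simp
    · intro b _ hb
      rw [if_neg]
      intro hab
      exact hb (by ext; exact hab.symm)
    · intro hmem; exact absurd (Finset.mem_univ _) hmem
  · rw [if_neg h, Finset.sum_eq_zero]
    intro b _
    rw [if_neg]
    intro hab
    exact h (hab ▸ b.isLt)

lemma lowerBound {dA dB : ℕ} (hA : 0 < dA) (hB : 0 < dB) (c : ℝ)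
    (h : ∀ ρ : Matrix (Fin dA × Fin dB) (Fin dA × Fin dB) ℂ,
        ρ.PosSemidef → ρ.trace = 1 →
        (c • ((Matrix.of fun a a' : Fin dA => ∑ b, ρ (a, b) (a', b)) ⊗ₖ
            (((dB : ℂ)⁻¹) • (1 : Matrix (Fin dB) (Fin dB) ℂ))) - ρ).PosSemidef) :
    (min dA dB : ℝ) * (dB : ℝ) ≤ c := by
  set mN : ℕ := min dA dB with hmN
  have hm : 0 < mN := lt_min hA hB
  have hmC : ((mN:ℕ):ℂ) ≠ 0 := by exact_mod_cast hm.ne'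
  set Ω : Fin dA × Fin dB → ℂ := fun p => if (p.1:ℕ) = (p.2:ℕ) then 1 else 0 with hΩ
  have hΩstar : ∀ p, star (Ω p) = Ω p := by
    intro p
    rw [hΩ]
    by_cases hp : (p.1:ℕ) = (p.2:ℕ)
    · simp [hp]
    · simp [hp]
  have hΩsq : ∀ p, Ω p * Ω p = Ω p := by
    intro p
    rw [hΩ]
    by_cases hp : (p.1:ℕ) = (p.2:ℕ)
    · simp [hp]
    · simp [hp]
  have hcount : ∑ p : Fin dA × Fin dB, Ω p = ((mN:ℕ):ℂ) := by
    rw [hΩ, Fintype.sum_prod_type]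
    calc (∑ a : Fin dA, ∑ b : Fin dB, if (a:ℕ) = (b:ℕ) then (1:ℂ) else 0)
        = ∑ a : Fin dA, if (a:ℕ) < dB then (1:ℂ) else 0 :=
          Finset.sum_congr rfl fun a _ => inner_lemma a
      _ = ((mN:ℕ):ℂ) := count_lemma
  set ρ : Matrix (Fin dA × Fin dB) (Fin dA × Fin dB) ℂ :=
    Matrix.of (fun p q => ((mN:ℕ):ℂ)⁻¹ * (Ω p * Ω q)) with hρdef
  have formρ : ∀ y : Fin dA × Fin dB → ℂ, dotProduct (star y) (ρ *ᵥ y)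
      = ((mN:ℕ):ℂ)⁻¹ * (star (∑ q, Ω q * y q) * (∑ q, Ω q * y q)) := by
    intro y
    rw [dotProduct]
    have e : ∀ p, star y p * (ρ *ᵥ y) p
        = ((mN:ℕ):ℂ)⁻¹ * ((star (y p) * Ω p) * (∑ q, Ω q * y q)) := by
      intro p
      rw [Matrix.mulVec, dotProduct]
      simp only [hρdef, Matrix.of_apply, Pi.star_apply]
      rw [Finset.mul_sum, Finset.mul_sum, Finset.mul_sum]
      apply Finset.sum_congr rfl
      intro q _
      ring
    rw [Finset.sum_congr rfl fun p _ => e p]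
    rw [← Finset.mul_sum, ← Finset.sum_mul]
    congr 1
    rw [star_sum]
    congr 1
    apply Finset.sum_congr rfl
    intro q _
    rw [star_mul', hΩstar]
    ring
  have hρPSD : ρ.PosSemidef := by
    refine Matrix.PosSemidef.of_dotProduct_mulVec_nonneg ?_ ?_
    · rw [Matrix.IsHermitian]
      ext p q
      rw [Matrix.conjTranspose_apply, hρdef, Matrix.of_apply, Matrix.of_apply, star_mul',
        star_mul', hΩstar, hΩstar]
      rw [star_inv₀, star_natCast]
      ring
    · intro y
      rw [formρ y]
      have h1 : (0:ℂ) ≤ ((mN:ℕ):ℂ)⁻¹ := by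
        have : ((mN:ℕ):ℂ)⁻¹ = ((((mN:ℕ):ℝ)⁻¹ : ℝ) : ℂ) := by push_cast; ring
        rw [this, Complex.zero_le_real]
        positivity
      exact mul_nonneg h1 (star_mul_self_nonneg _)
  have hρtr : ρ.trace = 1 := by
    rw [Matrix.trace]
    have e : ∀ p, ρ.diag p = ((mN:ℕ):ℂ)⁻¹ * Ω p := by
      intro p
      rw [Matrix.diag, hρdef, Matrix.of_apply, hΩsq]
    rw [Finset.sum_congr rfl fun p _ => e p, ← Finset.mul_sum, hcount,
      inv_mul_cancel₀ hmC]
  have hD := h ρ hρPSD hρtr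
  have hform := hD.dotProduct_mulVec_nonneg Ω
  -- compute the quadratic form value
  set ρA : Matrix (Fin dA) (Fin dA) ℂ := Matrix.of fun a a' : Fin dA => ∑ b, ρ (a, b) (a', b) with hρA
  set P1 : Fin dA → Fin dA → ℂ := fun a a' => if a = a' ∧ (a:ℕ) < dB then 1 else 0 with hP1def
  have hP1 : ∀ a a', (∑ b : Fin dB, Ω (a,b) * Ω (a',b)) = P1 a a' := by
    intro a a'
    by_cases haa : a = a'
    · subst haa
      simp only [hP1def, eq_self_iff_true, true_and]
      rw [Finset.sum_congr rfl fun b _ => hΩsq (a, b)]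
      simp only [hΩ]
      exact inner_lemma a
    · simp only [hP1def]
      rw [if_neg (by simp [haa])]
      apply Finset.sum_eq_zero
      intro b _
      simp only [hΩ]
      by_cases h1 : (a:ℕ) = (b:ℕ)
      · rw [if_neg (show ¬(a':ℕ) = (b:ℕ) from fun h2 => haa (Fin.ext (h1.trans h2.symm)))]
        ring
      · rw [if_neg h1, zero_mul]
  have hρAe : ∀ a a', ρA a a' = ((mN:ℕ):ℂ)⁻¹ * P1 a a' := by
    intro a a'
    rw [hρA, Matrix.of_apply, ← hP1 a a', Finset.mul_sum]
    apply Finset.sum_congr rfl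
    intro b _
    rw [hρdef]
    rfl
  have hP1sum : (∑ a, ∑ a', P1 a a' * P1 a a') = ((mN:ℕ):ℂ) := by
    have e : ∀ a a', P1 a a' * P1 a a' = P1 a a' := by
      intro a a'
      simp only [hP1def]
      by_cases hc1 : a = a' ∧ (a:ℕ) < dB
      · rw [if_pos hc1, mul_one]
      · rw [if_neg hc1, mul_zero]
    have conv1 : ∀ (a a' : Fin dA), P1 a a'
        = if a' = a then (if (a:ℕ) < dB then (1:ℂ) else 0) else 0 := by
      intro a a'
      simp only [hP1def]
      by_cases h1 : a' = a
      · subst h1; simp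
      · rw [if_neg h1, if_neg (fun hh => h1 hh.1.symm)]
    have e2 : ∀ a : Fin dA, (∑ a', P1 a a') = if (a:ℕ) < dB then (1:ℂ) else 0 := by
      intro a
      rw [Finset.sum_congr rfl fun a' _ => conv1 a a']
      simp
    simp only [e, e2]
    exact count_lemma
  have hB1 : dotProduct (star Ω)
      ((Matrix.kroneckerMap (· * ·) ρA (1 : Matrix (Fin dB) (Fin dB) ℂ)) *ᵥ Ω) = 1 := by
    rw [quad_kron]
    have hb : ∀ b : Fin dB, dotProduct (star fun a => Ω (a,b)) (ρA *ᵥ fun a => Ω (a,b))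
        = ∑ a, ∑ a', Ω (a,b) * (ρA a a' * Ω (a',b)) := by
      intro b
      rw [dotProduct]
      apply Finset.sum_congr rfl
      intro a _
      rw [Pi.star_apply, hΩstar, Matrix.mulVec, dotProduct, Finset.mul_sum]
    rw [Finset.sum_congr rfl fun b _ => hb b]
    calc (∑ b, ∑ a, ∑ a', Ω (a,b) * (ρA a a' * Ω (a',b)))
        = ∑ a, ∑ b, ∑ a', Ω (a,b) * (ρA a a' * Ω (a',b)) := Finset.sum_comm
      _ = ∑ a, ∑ a', ∑ b, Ω (a,b) * (ρA a a' * Ω (a',b)) :=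
          Finset.sum_congr rfl fun a _ => Finset.sum_comm
      _ = ∑ a, ∑ a', ρA a a' * ∑ b, Ω (a,b) * Ω (a',b) := by
          apply Finset.sum_congr rfl; intro a _
          apply Finset.sum_congr rfl; intro a' _
          rw [Finset.mul_sum]
          apply Finset.sum_congr rfl; intro b _
          ring
      _ = ∑ a, ∑ a', ((mN:ℕ):ℂ)⁻¹ * (P1 a a' * P1 a a') := by
          apply Finset.sum_congr rfl; intro a _
          apply Finset.sum_congr rfl; intro a' _
          rw [hP1 a a', hρAe a a']
          ring
      _ = ((mN:ℕ):ℂ)⁻¹ * ∑ a, ∑ a', P1 a a' * P1 a a' := by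
          rw [Finset.mul_sum]
          apply Finset.sum_congr rfl; intro a _
          rw [Finset.mul_sum]
      _ = 1 := by rw [hP1sum, inv_mul_cancel₀ hmC]
  have hA1 : dotProduct (star Ω) (ρ *ᵥ Ω) = ((mN:ℕ):ℂ) := by
    rw [formρ Ω]
    have hs : (∑ q, Ω q * Ω q) = ((mN:ℕ):ℂ) := by
      rw [Finset.sum_congr rfl fun q _ => hΩsq q, hcount]
    rw [hs, star_natCast]
    field_simp
  have hsmul : Matrix.kroneckerMap (· * ·) ρA (((dB : ℂ)⁻¹) • (1 : Matrix (Fin dB) (Fin dB) ℂ))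
      = ((dB : ℂ)⁻¹) • (Matrix.kroneckerMap (· * ·) ρA (1 : Matrix (Fin dB) (Fin dB) ℂ)) :=
    Matrix.kronecker_smul _ _ _
  have hval : dotProduct (star Ω)
      ((c • (ρA ⊗ₖ (((dB : ℂ)⁻¹) • (1 : Matrix (Fin dB) (Fin dB) ℂ))) - ρ) *ᵥ Ω)
      = ((c * (dB:ℝ)⁻¹ - (mN:ℕ) : ℝ) : ℂ) := by
    rw [Matrix.sub_mulVec, dotProduct_sub, hsmul, Matrix.smul_mulVec,
      Matrix.smul_mulVec, dotProduct_smul, dotProduct_smul, hB1, hA1]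
    rw [Complex.real_smul, smul_eq_mul]
    push_cast
    ring
  rw [hval] at hform
  rw [Complex.zero_le_real] at hform
  have hdB : (0:ℝ) < dB := by exact_mod_cast hB
  have : ((mN:ℕ):ℝ) * dB ≤ c := by
    have h2 : ((mN:ℕ):ℝ) ≤ c * (dB:ℝ)⁻¹ := by linarith
    calc ((mN:ℕ):ℝ) * dB ≤ (c * (dB:ℝ)⁻¹) * dB := by
          apply mul_le_mul_of_nonneg_right h2 hdB.le
      _ = c := by field_simp
  calc (min dA dB : ℝ) * (dB : ℝ) = ((mN:ℕ):ℝ) * dB := by rw [hmN, Nat.cast_min]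
    _ ≤ c := this

end PP
end

/-- Pimsner–Popa index for a single block: the least constant `c > 0` with
`ρ ≤ c (ρ_A ⊗ 1/d_B)` for every state `ρ` on `A ⊗ B` equals
`min d_A d_B · d_B`. -/
theorem stmt19 (dA dB : ℕ) (hA : 0 < dA) (hB : 0 < dB) :
    IsLeast
      {c : ℝ | 0 < c ∧ ∀ ρ : Matrix (Fin dA × Fin dB) (Fin dA × Fin dB) ℂ,
        ρ.PosSemidef → ρ.trace = 1 →
        (c • ((Matrix.of fun a a' : Fin dA => ∑ b, ρ (a, b) (a', b)) ⊗ₖ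
            (((dB : ℂ)⁻¹) • (1 : Matrix (Fin dB) (Fin dB) ℂ))) - ρ).PosSemidef}
      ((min dA dB : ℝ) * (dB : ℝ)) := by
  constructor
  · constructor
    · have h1 : (0:ℝ) < min (dA:ℝ) (dB:ℝ) := by
        apply lt_min
        · exact_mod_cast hA
        · exact_mod_cast hB
      have h2 : (0:ℝ) < (dB:ℝ) := by exact_mod_cast hB
      exact mul_pos h1 h2
    · intro ρ hρ _
      exact PP.membership hA hB ρ hρ
  · rintro c ⟨_, hc2⟩
    exact PP.lowerBound hA hB c hc2
end
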